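/- arXiv:1202.5500 — 6 statements merged into one kernel-verified Lean document; each statement's English description precedes it below -/
import Mathlib

section
/- If x₁,…,x_n are real numbers with Σ_{j=1}^n x_j² = 1 and S = Σ_{j=1}^n β_j·x_j, then Pr( |S| ≥ √(2e·log(2n/δ)) ) ≤ δ/n. -/
open MeasureTheory ProbabilityTheory
open scoped ENNReal NNReal

/-- A function bounded by 1 in absolute value is integrable w.r.t. a probability measure. -/
lemma aux_integrable_of_bdd {Ω : Type*} [MeasurableSpace Ω] (μ : Measure Ω)
    [IsProbabilityMeasure μ] {f : Ω → ℝ} (hm : Measurable f) (hb : ∀ ω, |f ω| ≤ 1) :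
    Integrable f μ := by
  refine (integrable_const (1 : ℝ)).mono' hm.aestronglyMeasurable ?_
  filter_upwards with ω using by simpa using hb ω

/-- Integral of a product of independent bounded random variables. -/
lemma aux_integral_prod {ι : Type*} {Ω : Type*} [MeasurableSpace Ω] (μ : Measure Ω)
    [IsProbabilityMeasure μ] (f : ι → Ω → ℝ) (hm : ∀ i, Measurable (f i))
    (hb : ∀ i ω, |f i ω| ≤ 1)
    (hindep : iIndepFun f μ) (s : Finset ι) :
    ∫ ω, ∏ i ∈ s, f i ω ∂μ = ∏ i ∈ s, ∫ ω, f i ω ∂μ := by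
  classical
  induction s using Finset.cons_induction with
  | empty => simp
  | cons a s ha ih =>
    have hint : ∀ t : Finset ι, Integrable (fun ω => ∏ i ∈ t, f i ω) μ := by
      intro t
      refine aux_integrable_of_bdd μ (Finset.measurable_prod _ fun i _ => hm i) fun ω => ?_
      rw [Finset.abs_prod]
      exact Finset.prod_le_one (fun i _ => abs_nonneg _) (fun i _ => hb i ω)
    have hIndep : IndepFun (∏ j ∈ s, f j) (f a) μ :=
      hindep.indepFun_finsetProd_of_notMem hm ha
    have hprod : (∏ j ∈ s, f j) = fun ω => ∏ j ∈ s, f j ω := by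
      funext ω; simp
    have h1 : Integrable (∏ j ∈ s, f j) μ := by rw [hprod]; exact hint s
    have h2 : Integrable (f a) μ := aux_integrable_of_bdd μ (hm a) (hb a)
    have key := hIndep.symm.integral_mul_eq_mul_integral h2.aestronglyMeasurable h1.aestronglyMeasurable
    have key2 : ∫ ω, f a ω * ∏ i ∈ s, f i ω ∂μ
        = (∫ ω, f a ω ∂μ) * ∫ ω, ∏ i ∈ s, f i ω ∂μ := by
      have : (fun ω => f a ω * ∏ i ∈ s, f i ω) = f a * ∏ j ∈ s, f j := by
        funext ω; simp [hprod]
      rw [← this] at key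
      rw [hprod] at key
      exact key
    simp only [Finset.prod_cons, key2, ih]

lemma aux_sign_pow {b : ℝ} (hb : b = 1 ∨ b = -1) (k : ℕ) :
    b ^ k = if Odd k then b else 1 := by
  rcases hb with hb | hb <;> subst hb
  · simp
  · rcases Nat.even_or_odd k with h | h
    · simp [h.neg_one_pow, h, Nat.not_odd_iff_even.mpr h]
    · simp [h.neg_one_pow, h]

lemma aux_integral_sign {Ω : Type*} [MeasurableSpace Ω] (μ : Measure Ω)
    [IsProbabilityMeasure μ] (b : Ω → ℝ) (hm : Measurable b)
    (hv : ∀ ω, b ω = 1 ∨ b ω = -1) (hd : μ {ω | b ω = 1} = 1 / 2) :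
    ∫ ω, b ω ∂μ = 0 := by
  have hAmeas : MeasurableSet {ω | b ω = 1} := hm (measurableSet_singleton 1)
  have heq : b = fun ω => 2 * Set.indicator {ω | b ω = 1} (fun _ => (1:ℝ)) ω - 1 := by
    funext ω
    rcases hv ω with h | h
    · simp [Set.indicator_of_mem (show ω ∈ {ω | b ω = 1} from h), h]; norm_num
    · have : ω ∉ {ω | b ω = 1} := by simp [Set.mem_setOf_eq, h]; norm_num
      simp [Set.indicator_of_notMem this, h]
  have hind : Integrable (Set.indicator {ω | b ω = 1} (fun _ => (1:ℝ))) μ :=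
    (integrable_const (1:ℝ)).indicator hAmeas
  rw [heq]
  rw [integral_sub (hind.const_mul 2) (integrable_const 1)]
  rw [MeasureTheory.integral_const_mul, integral_indicator_const _ hAmeas, integral_const]
  simp [hd]
  rw [measureReal_def, hd, ENNReal.toReal_div]; norm_num

/-- If `∑ xⱼ² = 1` and `S = ∑ βⱼ xⱼ` where the `βⱼ` are `±1` random signs which are
`l`-wise independent with `l = 2⌈log(n/δ)⌉`, then
`Pr(|S| ≥ √(2e·log(2n/δ))) ≤ δ/n`. -/
theorem tail_of_lwise_independent_sign_sum
    {Ω : Type*} [MeasurableSpace Ω] (μ : Measure Ω) [IsProbabilityMeasure μ]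
    (n : ℕ) (hn : 1 ≤ n) (δ : ℝ) (hδ : δ ∈ Set.Ioo (0 : ℝ) (1 / 2))
    (β : Fin n → Ω → ℝ)
    (hβmeas : ∀ j, Measurable (β j))
    (hβval : ∀ j ω, β j ω = 1 ∨ β j ω = -1)
    (hβdist : ∀ j, μ {ω | β j ω = 1} = 1 / 2)
    -- the `β`'s are `l`-wise independent with `l = 2⌈log(n/δ)⌉`
    (hβindep : ∀ S : Finset (Fin n),
      S.card ≤ 2 * ⌈Real.log ((n : ℝ) / δ)⌉₊ →
      iIndepFun (fun j : S => β (j : Fin n)) μ)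
    (x : Fin n → ℝ) (hx : ∑ j, x j ^ 2 = 1) :
    μ {ω | Real.sqrt (2 * Real.exp 1 * Real.log (2 * n / δ)) ≤ |∑ j, β j ω * x j|} ≤
      ENNReal.ofReal (δ / n) := by
  classical
  obtain ⟨hδ0, hδ2⟩ := hδ
  have hn1 : (1:ℝ) ≤ n := by exact_mod_cast hn
  have hn0 : (0:ℝ) < n := by linarith
  set r : ℝ := Real.log ((n : ℝ) / δ) with hr_def
  set m : ℕ := ⌈r⌉₊ with hm_def
  set L : ℝ := Real.log (2 * n / δ) with hL_def
  -- basic analytic facts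
  have hnd2 : (2:ℝ) < (n:ℝ) / δ := by
    rw [lt_div_iff₀ hδ0]; nlinarith
  have hr2 : Real.log 2 < r := Real.log_lt_log (by norm_num) hnd2
  have hlog2 : (0.6931471803:ℝ) < Real.log 2 := Real.log_two_gt_d9
  have hr0 : 0 < r := by linarith
  have hm1 : 1 ≤ m := Nat.one_le_ceil_iff.mpr hr0
  have hLr : L = Real.log 2 + r := by
    rw [hL_def, hr_def, mul_div_assoc, Real.log_mul (by norm_num) (by positivity)]
  have hL0 : 0 < L := by rw [hLr]; linarith
  have hmr : r ≤ (m:ℝ) := Nat.le_ceil r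
  have hmr1 : (m:ℝ) < r + 1 := Nat.ceil_lt_add_one hr0.le
  have hm2L : (m:ℝ) ≤ 2 * L := by rw [hLr] at *; nlinarith
  -- the random variable and its moment
  set S : Ω → ℝ := fun ω => ∑ j, β j ω * x j with hS_def
  have hSmeas : Measurable S :=
    Finset.measurable_sum _ (fun j _ => (hβmeas j).mul_const (x j))
  have hβb : ∀ j ω, |β j ω| ≤ 1 := by
    intro j ω; rcases hβval j ω with h | h <;> simp [h]
  have hz : ∀ j, ∫ ω, β j ω ∂μ = 0 :=
    fun j => aux_integral_sign μ (β j) (hβmeas j) (hβval j) (hβdist j)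
  have hprodint : ∀ T : Finset (Fin n), T.card ≤ 2 * m →
      ∫ ω, ∏ j ∈ T, β j ω ∂μ = if T = ∅ then 1 else 0 := by
    intro T hT
    rcases T.eq_empty_or_nonempty with hTe | hTne
    · simp [hTe]
    · rw [if_neg hTne.ne_empty]
      have hind := hβindep T hT
      have hprod := aux_integral_prod μ (fun j : T => β j) (fun j => hβmeas j)
        (fun j ω => hβb j ω) hind Finset.univ
      have h1 : (fun ω => ∏ i : T, β (i : Fin n) ω) = fun ω => ∏ j ∈ T, β j ω := by
        funext ω; exact Finset.prod_coe_sort T (fun j => β j ω)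
      rw [h1] at hprod
      rw [hprod]
      obtain ⟨j0, hj0⟩ := hTne
      exact Finset.prod_eq_zero (Finset.mem_univ (⟨j0, hj0⟩ : T)) (hz j0)
  have hmom : ∫ ω, (S ω) ^ (2 * m) ∂μ ≤ (m:ℝ) ^ m := by
    set P := Finset.piAntidiag (Finset.univ : Finset (Fin n)) (2 * m) with hP_def
    have hexp : ∀ ω, (S ω) ^ (2 * m) = ∑ k ∈ P, (Nat.multinomial Finset.univ k : ℝ) *
        ((∏ j, x j ^ k j) *
          ∏ j ∈ Finset.univ.filter (fun j => Odd (k j)), β j ω) := by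
      intro ω
      simp only [hS_def]
      rw [Finset.sum_pow_eq_sum_piAntidiag]
      refine Finset.sum_congr rfl fun k hk => ?_
      have h1 : ∏ j, (β j ω * x j) ^ k j =
          (∏ j ∈ Finset.univ.filter (fun j => Odd (k j)), β j ω) * ∏ j, x j ^ k j := by
        rw [Finset.prod_filter, ← Finset.prod_mul_distrib]
        refine Finset.prod_congr rfl fun j _ => ?_
        rw [mul_pow, aux_sign_pow (hβval j ω) (k j)]
      rw [h1]; ring
    have hterm_int : ∀ k : Fin n → ℕ, Integrable (fun ω =>
        (Nat.multinomial Finset.univ k : ℝ) * ((∏ j, x j ^ k j) *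
          ∏ j ∈ Finset.univ.filter (fun j => Odd (k j)), β j ω)) μ := by
      intro k
      have hbi : Integrable (fun ω => ∏ j ∈ Finset.univ.filter (fun j => Odd (k j)), β j ω) μ :=
        aux_integrable_of_bdd μ (Finset.measurable_prod _ fun j _ => hβmeas j)
          (fun ω => by
            rw [Finset.abs_prod]
            exact Finset.prod_le_one (fun _ _ => abs_nonneg _) fun j _ => hβb j ω)
      exact (hbi.const_mul _).const_mul _
    have hEeq : ∫ ω, (S ω) ^ (2 * m) ∂μ = ∑ k ∈ P, (Nat.multinomial Finset.univ k : ℝ) *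
        ((∏ j, x j ^ k j) *
          ∫ ω, ∏ j ∈ Finset.univ.filter (fun j => Odd (k j)), β j ω ∂μ) := by
      calc ∫ ω, (S ω) ^ (2 * m) ∂μ
          = ∫ ω, ∑ k ∈ P, (Nat.multinomial Finset.univ k : ℝ) * ((∏ j, x j ^ k j) *
              ∏ j ∈ Finset.univ.filter (fun j => Odd (k j)), β j ω) ∂μ := by
            simp_rw [hexp]
        _ = ∑ k ∈ P, ∫ ω, (Nat.multinomial Finset.univ k : ℝ) * ((∏ j, x j ^ k j) *
              ∏ j ∈ Finset.univ.filter (fun j => Odd (k j)), β j ω) ∂μ :=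
            integral_finset_sum _ fun k _ => hterm_int k
        _ = _ := by
            refine Finset.sum_congr rfl fun k hk => ?_
            rw [MeasureTheory.integral_const_mul, MeasureTheory.integral_const_mul]
    have hcard : ∀ k ∈ P, (Finset.univ.filter (fun j => Odd (k j))).card ≤ 2 * m := by
      intro k hk
      rw [hP_def, Finset.mem_piAntidiag] at hk
      calc (Finset.univ.filter (fun j => Odd (k j))).card
          = ∑ _j ∈ Finset.univ.filter (fun j => Odd (k j)), 1 := by
            rw [Finset.card_eq_sum_ones]
        _ ≤ ∑ j ∈ Finset.univ.filter (fun j => Odd (k j)), k j :=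
            Finset.sum_le_sum fun j hj => (Finset.mem_filter.mp hj).2.pos
        _ ≤ ∑ j, k j := Finset.sum_le_sum_of_subset (Finset.filter_subset _ _)
        _ = 2 * m := hk.1
    have hEeq2 : ∫ ω, (S ω) ^ (2 * m) ∂μ = ∑ k ∈ P.filter (fun k => ∀ j, Even (k j)),
        (Nat.multinomial Finset.univ k : ℝ) * ∏ j, x j ^ k j := by
      rw [hEeq, Finset.sum_filter]
      refine Finset.sum_congr rfl fun k hk => ?_
      by_cases hev : ∀ j, Even (k j)
      · rw [if_pos hev]
        have he : Finset.univ.filter (fun j => Odd (k j)) = ∅ := by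
          rw [Finset.filter_eq_empty_iff]
          intro j _
          exact Nat.not_odd_iff_even.mpr (hev j)
        rw [hprodint _ (hcard k hk), if_pos he, mul_one]
      · rw [if_neg hev]
        have hne : Finset.univ.filter (fun j => Odd (k j)) ≠ ∅ := by
          rw [Ne, Finset.filter_eq_empty_iff]
          intro hcon
          obtain ⟨j, hj⟩ := not_forall.mp hev
          exact hj (Nat.not_odd_iff_even.mp (hcon (Finset.mem_univ j)))
        rw [hprodint _ (hcard k hk), if_neg hne, mul_zero, mul_zero]
    have hre : ∑ k ∈ P.filter (fun k => ∀ j, Even (k j)),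
        (Nat.multinomial Finset.univ k : ℝ) * ∏ j, x j ^ k j
        = ∑ a ∈ Finset.piAntidiag (Finset.univ : Finset (Fin n)) m,
          (Nat.multinomial Finset.univ (fun j => 2 * a j) : ℝ) * ∏ j, x j ^ (2 * a j) := by
      refine Finset.sum_nbij' (i := fun k j => k j / 2) (j := fun a j => 2 * a j)
        ?_ ?_ ?_ ?_ ?_
      · intro k hk
        rw [hP_def, Finset.mem_filter, Finset.mem_piAntidiag] at hk
        obtain ⟨⟨hsum, _⟩, hev⟩ := hk
        rw [Finset.mem_piAntidiag]
        refine ⟨?_, fun j _ => Finset.mem_univ j⟩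
        have h2 : 2 * ∑ j, k j / 2 = 2 * m := by
          rw [Finset.mul_sum, ← hsum]
          exact Finset.sum_congr rfl fun j _ => Nat.mul_div_cancel' (hev j).two_dvd
        exact Nat.eq_of_mul_eq_mul_left two_pos h2
      · intro a ha
        rw [Finset.mem_piAntidiag] at ha
        rw [hP_def, Finset.mem_filter, Finset.mem_piAntidiag]
        refine ⟨⟨?_, fun j _ => Finset.mem_univ j⟩, fun j => even_two_mul (a j)⟩
        rw [← Finset.mul_sum, ha.1]
      · intro k hk
        rw [Finset.mem_filter] at hk
        funext j
        exact Nat.mul_div_cancel' (hk.2 j).two_dvd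
      · intro a ha
        funext j
        exact Nat.mul_div_cancel_left _ (by norm_num)
      · intro k hk
        rw [Finset.mem_filter] at hk
        have e1 : Nat.multinomial Finset.univ (fun j => 2 * (k j / 2)) =
            Nat.multinomial Finset.univ k :=
          Nat.multinomial_congr fun j _ => Nat.mul_div_cancel' (hk.2 j).two_dvd
        have e2 : ∏ j, x j ^ (2 * (k j / 2)) = ∏ j, x j ^ k j :=
          Finset.prod_congr rfl fun j _ => by rw [Nat.mul_div_cancel' (hk.2 j).two_dvd]
        simp only [e1, e2]
    rw [hEeq2, hre]
    have hterm : ∀ a ∈ Finset.piAntidiag (Finset.univ : Finset (Fin n)) m,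
        (Nat.multinomial Finset.univ (fun j => 2 * a j) : ℝ) * ∏ j, x j ^ (2 * a j)
        ≤ (m:ℝ) ^ m * ((Nat.multinomial Finset.univ a : ℝ) * ∏ j, (x j ^ 2) ^ a j) := by
      intro a ha
      rw [Finset.mem_piAntidiag] at ha
      have hmul := Nat.multinomial_two_mul_le_mul_multinomial (s := Finset.univ) (f := a)
      rw [ha.1] at hmul
      have hprodeq : ∏ j, x j ^ (2 * a j) = ∏ j, (x j ^ 2) ^ a j :=
        Finset.prod_congr rfl fun j _ => pow_mul (x j) 2 (a j)
      have hpn : (0:ℝ) ≤ ∏ j, (x j ^ 2) ^ a j :=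
        Finset.prod_nonneg fun j _ => pow_nonneg (sq_nonneg _) _
      rw [hprodeq, ← mul_assoc]
      refine mul_le_mul_of_nonneg_right ?_ hpn
      exact_mod_cast hmul
    calc ∑ a ∈ Finset.piAntidiag (Finset.univ : Finset (Fin n)) m,
        (Nat.multinomial Finset.univ (fun j => 2 * a j) : ℝ) * ∏ j, x j ^ (2 * a j)
        ≤ ∑ a ∈ Finset.piAntidiag (Finset.univ : Finset (Fin n)) m,
          (m:ℝ) ^ m * ((Nat.multinomial Finset.univ a : ℝ) * ∏ j, (x j ^ 2) ^ a j) :=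
        Finset.sum_le_sum hterm
      _ = (m:ℝ) ^ m * ∑ a ∈ Finset.piAntidiag (Finset.univ : Finset (Fin n)) m,
          (Nat.multinomial Finset.univ a : ℝ) * ∏ j, (x j ^ 2) ^ a j := by
        rw [Finset.mul_sum]
      _ = (m:ℝ) ^ m := by
        rw [← Finset.sum_pow_eq_sum_piAntidiag, hx, one_pow, mul_one]
  have hSint : Integrable (fun ω => (S ω) ^ (2 * m)) μ := by
    refine (integrable_const ((∑ j, |x j|) ^ (2 * m))).mono'
      ((hSmeas.pow_const _).aestronglyMeasurable) ?_
    filter_upwards with ω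
    rw [Real.norm_eq_abs, abs_pow]
    refine pow_le_pow_left₀ (abs_nonneg _) ?_ _
    refine (Finset.abs_sum_le_sum_abs _ _).trans ?_
    refine Finset.sum_le_sum fun j _ => ?_
    rw [abs_mul]
    exact mul_le_of_le_one_left (abs_nonneg _) (hβb j ω)
  -- Markov's inequality
  set ε : ℝ := (2 * Real.exp 1 * L) ^ m with hε_def
  have hεpos : 0 < ε := by positivity
  have hsub : {ω | Real.sqrt (2 * Real.exp 1 * L) ≤ |S ω|} ⊆ {ω | ε ≤ (S ω) ^ (2 * m)} := by
    intro ω hω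
    simp only [Set.mem_setOf_eq] at hω ⊢
    have h1 : ε = Real.sqrt (2 * Real.exp 1 * L) ^ (2 * m) := by
      rw [pow_mul, Real.sq_sqrt (by positivity)]
    have h2 : |S ω| ^ (2 * m) = (S ω) ^ (2 * m) := by
      rw [pow_abs, abs_of_nonneg ((even_two_mul m).pow_nonneg _)]
    rw [h1, ← h2]
    exact pow_le_pow_left₀ (Real.sqrt_nonneg _) hω _
  have hmarkov := mul_meas_ge_le_integral_of_nonneg
    (Filter.Eventually.of_forall fun ω => (even_two_mul m).pow_nonneg (S ω)) hSint ε
  have htail : (μ {ω | ε ≤ (S ω) ^ (2 * m)}).toReal ≤ δ / n := by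
    have hfin : (m:ℝ) ^ m * ((n:ℝ) / δ) ≤ ε := by
      have e1 : (n:ℝ) / δ = Real.exp r := (Real.exp_log (by positivity)).symm
      have e2 : Real.exp r ≤ Real.exp 1 ^ m := by
        rw [← Real.exp_nat_mul, mul_one]
        exact Real.exp_le_exp.mpr hmr
      have e3 : (m:ℝ) ^ m * Real.exp 1 ^ m = ((m:ℝ) * Real.exp 1) ^ m := (mul_pow _ _ _).symm
      have e4 : ((m:ℝ) * Real.exp 1) ^ m ≤ (2 * Real.exp 1 * L) ^ m := by
        refine pow_le_pow_left₀ (by positivity) ?_ _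
        nlinarith [Real.exp_pos 1, mul_le_mul_of_nonneg_right hm2L (Real.exp_pos 1).le]
      calc (m:ℝ) ^ m * ((n:ℝ) / δ) ≤ (m:ℝ) ^ m * Real.exp 1 ^ m := by
            rw [e1]; exact mul_le_mul_of_nonneg_left e2 (by positivity)
        _ = ((m:ℝ) * Real.exp 1) ^ m := e3
        _ ≤ ε := e4
    have h5 : (m:ℝ) ^ m ≤ ε * (δ / n) := by
      have h5a := mul_le_mul_of_nonneg_right hfin (div_pos hδ0 hn0).le
      have hne : (n:ℝ) / δ * (δ / n) = 1 := by field_simp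
      nlinarith [h5a]
    have h6 : ε * (μ {ω | ε ≤ (S ω) ^ (2 * m)}).toReal ≤ ε * (δ / n) :=
      le_trans (hmarkov.trans hmom) h5
    exact le_of_mul_le_mul_left h6 hεpos
  calc μ {ω | Real.sqrt (2 * Real.exp 1 * L) ≤ |S ω|}
      ≤ μ {ω | ε ≤ (S ω) ^ (2 * m)} := measure_mono hsub
    _ = ENNReal.ofReal ((μ {ω | ε ≤ (S ω) ^ (2 * m)}).toReal) :=
        (ENNReal.ofReal_toReal (measure_ne_top μ _)).symm
    _ ≤ ENNReal.ofReal (δ / n) := ENNReal.ofReal_le_ofReal htail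
end

section
/- Let u ∈ ℝⁿ with ‖u‖₂ = 1 and let V = H·D·u. Then Pr( ‖V‖_∞ ≥ √(2e·log(2n/δ))/√n ) ≤ δ. -/
open MeasureTheory ProbabilityTheory
open scoped ENNReal NNReal

/-- The normalized Walsh–Hadamard matrix of size `2^m × 2^m`, defined recursively by
`H₁ = (1)` and `H_{2n} = (1/√2) · [[H_n, H_n], [H_n, -H_n]]`. -/
noncomputable def WH : (m : ℕ) → Matrix (Fin (2 ^ m)) (Fin (2 ^ m)) ℝ
  | 0 => fun _ _ => 1
  | m + 1 =>
      Matrix.reindex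
        (finSumFinEquiv.trans (finCongr (by rw [pow_succ]; ring)))
        (finSumFinEquiv.trans (finCongr (by rw [pow_succ]; ring)))
        ((Real.sqrt 2)⁻¹ • Matrix.fromBlocks (WH m) (WH m) (WH m) (-WH m))

section Helpers
open Finset Nat

lemma WH_sq : ∀ (m : ℕ) (i j : Fin (2 ^ m)), (WH m i j) ^ 2 = ((2 : ℝ) ^ m)⁻¹
  | 0, i, j => by simp [WH]
  | (m + 1), i, j => by
    rw [WH]
    simp only [Matrix.reindex_apply, Matrix.submatrix_apply]
    have h2 : ((Real.sqrt 2)⁻¹) ^ 2 = (2 : ℝ)⁻¹ := by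
      rw [inv_pow, Real.sq_sqrt (by norm_num : (0:ℝ) ≤ 2)]
    rcases hi : (finSumFinEquiv.trans (finCongr (by rw [pow_succ]; ring) :
        Fin (2 ^ m + 2 ^ m) ≃ Fin (2 ^ (m+1)))).symm i with i' | i' <;>
      rcases hj : (finSumFinEquiv.trans (finCongr (by rw [pow_succ]; ring) :
        Fin (2 ^ m + 2 ^ m) ≃ Fin (2 ^ (m+1)))).symm j with j' | j' <;>
      simp only [Matrix.smul_apply, Matrix.fromBlocks_apply₁₁, Matrix.fromBlocks_apply₁₂,
        Matrix.fromBlocks_apply₂₁, Matrix.fromBlocks_apply₂₂, Matrix.neg_apply, smul_eq_mul,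
        mul_pow, neg_sq] <;>
      rw [h2, WH_sq m, pow_succ, mul_inv] <;> ring

-- 2 * k^k ≤ (k+1)^k for k ≥ 1
lemma two_mul_pow_le_succ_pow {k : ℕ} (hk : 1 ≤ k) : 2 * k ^ k ≤ (k + 1) ^ k := by
  have hk' : (0:ℝ) < k := by exact_mod_cast hk
  have ha : (-2:ℝ) ≤ (k:ℝ)⁻¹ := by
    have : (0:ℝ) ≤ (k:ℝ)⁻¹ := by positivity
    linarith
  have h := one_add_mul_le_pow ha k
  have hmul : (k:ℝ) * (k:ℝ)⁻¹ = 1 := mul_inv_cancel₀ (ne_of_gt hk')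
  have key : (2:ℝ) * (k:ℝ) ^ k ≤ ((k:ℝ) + 1) ^ k := by
    calc (2:ℝ) * (k:ℝ) ^ k = (1 + (k:ℝ) * (k:ℝ)⁻¹) * (k:ℝ) ^ k := by rw [hmul]; ring
      _ ≤ (1 + (k:ℝ)⁻¹) ^ k * (k:ℝ) ^ k := mul_le_mul_of_nonneg_right h (by positivity)
      _ = ((1 + (k:ℝ)⁻¹) * (k:ℝ)) ^ k := (mul_pow _ _ _).symm
      _ = ((k:ℝ) + 1) ^ k := by
          rw [add_mul, one_mul, inv_mul_cancel₀ (ne_of_gt hk')]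
  exact_mod_cast key

lemma factorial_two_mul_le (k : ℕ) : (2 * k)! ≤ 2 ^ k * k ! * k ^ k := by
  induction k with
  | zero => simp
  | succ k ih =>
    have key : (2 * k + 1) * k ^ k ≤ (k + 1) ^ (k + 1) := by
      rcases Nat.eq_zero_or_pos k with rfl | hk
      · simp
      · calc (2 * k + 1) * k ^ k ≤ (k + 1) * (2 * k ^ k) := by
              rw [show (k + 1) * (2 * k ^ k) = (2 * k + 2) * k ^ k by ring]
              exact Nat.mul_le_mul_right _ (by omega)
          _ ≤ (k + 1) * (k + 1) ^ k := by
              exact Nat.mul_le_mul_left _ (two_mul_pow_le_succ_pow hk)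
          _ = (k + 1) ^ (k + 1) := by ring
    have e1 : 2 * (k + 1) = 2 * k + 2 := by ring
    calc (2 * (k + 1))! = (2 * k + 2) * ((2 * k + 1) * (2 * k)!) := by
          rw [e1]; rw [Nat.factorial_succ]; rw [Nat.factorial_succ]
      _ ≤ (2 * k + 2) * ((2 * k + 1) * (2 ^ k * k ! * k ^ k)) :=
          Nat.mul_le_mul_left _ (Nat.mul_le_mul_left _ ih)
      _ = (2 * (k + 1)) * 2 ^ k * k ! * ((2 * k + 1) * k ^ k) := by ring
      _ ≤ (2 * (k + 1)) * 2 ^ k * k ! * ((k + 1) ^ (k + 1)) := Nat.mul_le_mul_left _ key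
      _ = 2 ^ (k + 1) * (k + 1)! * (k + 1) ^ (k + 1) := by
          rw [Nat.factorial_succ, pow_succ]; ring

lemma two_pow_mul_factorial_le (a : ℕ) : 2 ^ a * a ! ≤ (2 * a)! := by
  induction a with
  | zero => simp
  | succ a ih =>
    have e1 : 2 * (a + 1) = 2 * a + 2 := by ring
    calc 2 ^ (a + 1) * (a + 1)! = (2 * a + 2) * (2 ^ a * a !) := by
          rw [Nat.factorial_succ, pow_succ]; ring
      _ ≤ (2 * a + 2) * (2 * a)! := Nat.mul_le_mul_left _ ih
      _ ≤ (2 * a + 2) * ((2 * a + 1) * (2 * a)!) :=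
          Nat.mul_le_mul_left _ (Nat.le_mul_of_pos_left _ (by omega))
      _ = (2 * (a + 1))! := by rw [e1, Nat.factorial_succ, Nat.factorial_succ]

variable {Ω : Type*} [MeasurableSpace Ω] {μ : Measure Ω} [IsProbabilityMeasure μ]

lemma integrable_of_bdd {f : Ω → ℝ} (hm : Measurable f) {C : ℝ} (hb : ∀ ω, |f ω| ≤ C) :
    Integrable f μ :=
  (integrable_const C).mono' hm.aestronglyMeasurable
    (Filter.Eventually.of_forall (by simpa [Real.norm_eq_abs] using hb))

lemma sign_integral_zero {g : Ω → ℝ} (hm : Measurable g) (hv : ∀ ω, g ω = 1 ∨ g ω = -1)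
    (hd : μ {ω | g ω = 1} = 1 / 2) : ∫ ω, g ω ∂μ = 0 := by
  set A : Set Ω := {ω | g ω = 1} with hA_def
  have hA : MeasurableSet A := hm (measurableSet_singleton 1)
  have hbd : ∀ ω, |g ω| ≤ 1 := fun ω => by rcases hv ω with h | h <;> simp [h]
  have hint : Integrable g μ := integrable_of_bdd hm hbd
  have h1 : ∫ ω in A, g ω ∂μ = (μ A).toReal := by
    rw [setIntegral_congr_fun hA (fun ω h => h), setIntegral_const, smul_eq_mul, mul_one]; rfl
  have h2 : ∫ ω in Aᶜ, g ω ∂μ = -(μ Aᶜ).toReal := by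
    rw [setIntegral_congr_fun hA.compl (fun ω h => (hv ω).resolve_left h), setIntegral_const]
    simp; rfl
  have hAc : μ Aᶜ = 1 / 2 := by
    rw [measure_compl hA (measure_ne_top _ _), measure_univ, hd]
    rw [one_div, ENNReal.one_sub_inv_two]
  rw [← integral_add_compl hA hint, h1, h2, hd, hAc, add_neg_cancel]

lemma integral_prod_eq_prod_integral {ι : Type*} {g : ι → Ω → ℝ}
    (hindep : iIndepFun g μ)
    (hmeas : ∀ i, Measurable (g i)) (hbdd : ∀ i ω, |g i ω| ≤ 1) (s : Finset ι) :
    ∫ ω, ∏ i ∈ s, g i ω ∂μ = ∏ i ∈ s, ∫ ω, g i ω ∂μ := by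
  classical
  induction s using Finset.induction_on with
  | empty => simp
  | @insert a s ha ih =>
    have hmeasP : Measurable (∏ i ∈ s, g i) := by
      rw [Finset.prod_fn]; exact Finset.measurable_prod s (fun i _ => hmeas i)
    have hbdP : ∀ ω, |(∏ i ∈ s, g i) ω| ≤ 1 := by
      intro ω
      rw [Finset.prod_apply, abs_prod]
      exact Finset.prod_le_one (fun i _ => abs_nonneg _) (fun i _ => hbdd i ω)
    have hXint : Integrable (∏ i ∈ s, g i) μ := integrable_of_bdd hmeasP hbdP
    have haint : Integrable (g a) μ := integrable_of_bdd (hmeas a) (hbdd a)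
    have hind : IndepFun (∏ i ∈ s, g i) (g a) μ :=
      hindep.indepFun_finset_prod_of_notMem hmeas ha
    calc ∫ ω, ∏ i ∈ insert a s, g i ω ∂μ = ∫ ω, ((∏ i ∈ s, g i) * g a) ω ∂μ := by
          congr 1; funext ω
          rw [Finset.prod_insert ha]
          simp [Finset.prod_apply, mul_comm]
      _ = (∫ ω, (∏ i ∈ s, g i) ω ∂μ) * ∫ ω, g a ω ∂μ :=
          hind.integral_mul_eq_mul_integral hXint.aestronglyMeasurable haint.aestronglyMeasurable
      _ = ∏ i ∈ insert a s, ∫ ω, g i ω ∂μ := by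
          rw [Finset.prod_insert ha, ← ih, mul_comm]
          congr 1
          simp [Finset.prod_apply]

lemma moment_bound {Ω : Type*} [MeasurableSpace Ω] (μ : Measure Ω) [IsProbabilityMeasure μ]
    {n : ℕ} (β : Fin n → Ω → ℝ)
    (hβmeas : ∀ j, Measurable (β j))
    (hβval : ∀ j ω, β j ω = 1 ∨ β j ω = -1)
    (hβdist : ∀ j, μ {ω | β j ω = 1} = 1 / 2)
    (k : ℕ)
    (hindep : ∀ S : Finset (Fin n), S.card ≤ 2 * k →
      iIndepFun (fun j : S => β (j : Fin n)) μ)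
    (a : Fin n → ℝ) :
    ∫ ω, (∑ j, a j * β j ω) ^ (2 * k) ∂μ ≤
      ((2 * k)! : ℝ) / (2 ^ k * k !) * (∑ j, a j ^ 2) ^ k := by
  classical
  set P : (Fin n → ℕ) → Ω → ℝ := fun f ω => ∏ j, β j ω ^ f j with hP_def
  have hPmeas : ∀ f, Measurable (P f) := by
    intro f
    apply Finset.measurable_prod
    intro j _
    exact (hβmeas j).pow_const _
  have hβbd : ∀ j ω, |β j ω| ≤ 1 := fun j ω => by rcases hβval j ω with h | h <;> simp [h]
  have hPbd : ∀ f ω, |P f ω| ≤ 1 := by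
    intro f ω
    rw [hP_def, abs_prod]
    refine Finset.prod_le_one (fun j _ => abs_nonneg _) (fun j _ => ?_)
    rw [abs_pow]
    exact pow_le_one₀ (abs_nonneg _) (hβbd j ω)
  -- Step A : pointwise expansion
  have expand : ∀ ω, (∑ j, a j * β j ω) ^ (2 * k) =
      ∑ f ∈ piAntidiag (univ : Finset (Fin n)) (2 * k),
        (Nat.multinomial univ f : ℝ) * ((∏ j, a j ^ f j) * P f ω) := by
    intro ω
    rw [Finset.sum_pow_eq_sum_piAntidiag]
    refine Finset.sum_congr rfl fun f hf => ?_
    rw [hP_def, ← Finset.prod_mul_distrib]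
    simp_rw [mul_pow]
  -- Step D : value of ∫ P f
  have hPint : ∀ f ∈ piAntidiag (univ : Finset (Fin n)) (2 * k),
      ∫ ω, P f ω ∂μ = if ∀ j, Even (f j) then 1 else 0 := by
    intro f hf
    obtain ⟨hsum, -⟩ := (Finset.mem_piAntidiag).1 hf
    set T : Finset (Fin n) := univ.filter (fun j => f j ≠ 0) with hT_def
    have hTcard : T.card ≤ 2 * k := by
      calc T.card = ∑ j ∈ T, 1 := by simp
        _ ≤ ∑ j ∈ T, f j := Finset.sum_le_sum (fun j hj => by
            have := (Finset.mem_filter.1 hj).2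
            omega)
        _ ≤ ∑ j ∈ univ, f j := Finset.sum_le_sum_of_subset (Finset.filter_subset _ _)
        _ = 2 * k := hsum
    have hrestr : ∀ ω, P f ω = ∏ j ∈ T, β j ω ^ f j := by
      intro ω
      rw [hP_def]
      exact (Finset.prod_subset (Finset.subset_univ T) (fun x _ hx => by
        have : f x = 0 := by
          by_contra h
          exact hx (Finset.mem_filter.2 ⟨Finset.mem_univ x, h⟩)
        rw [this, pow_zero])).symm
    have hind := hindep T hTcard
    have hind2 : iIndepFun
        (fun j : T => fun ω => β (j : Fin n) ω ^ f (j : Fin n)) μ :=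
      hind.comp (fun j : T => fun x : ℝ => x ^ f (j : Fin n))
        (fun j => measurable_id.pow_const _)
    have hmeas2 : ∀ j : T, Measurable (fun ω => β (j : Fin n) ω ^ f (j : Fin n)) :=
      fun j => (hβmeas _).pow_const _
    have hbd2 : ∀ (j : T) ω, |β (j : Fin n) ω ^ f (j : Fin n)| ≤ 1 := by
      intro j ω
      rw [abs_pow]
      exact pow_le_one₀ (abs_nonneg _) (hβbd _ ω)
    have key := integral_prod_eq_prod_integral hind2 hmeas2 hbd2 Finset.univ
    have hre : ∫ ω, P f ω ∂μ = ∏ j : T, ∫ ω, β (j : Fin n) ω ^ f (j : Fin n) ∂μ := by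
      rw [← key]
      congr 1
      funext ω
      rw [hrestr ω, ← Finset.prod_attach T (fun j => β j ω ^ f j), Finset.univ_eq_attach]
    by_cases hEv : ∀ j, Even (f j)
    · rw [if_pos hEv, hre]
      refine Finset.prod_eq_one (fun j _ => ?_)
      have : (fun ω => β (j : Fin n) ω ^ f (j : Fin n)) = fun _ => (1 : ℝ) := by
        funext ω
        rcases hβval (j : Fin n) ω with h | h <;> rw [h]
        · exact one_pow _
        · exact (hEv _).neg_one_pow
      rw [this, integral_const]
      simp
    · rw [if_neg hEv, hre]
      push_neg at hEv
      obtain ⟨j0, hj0⟩ := hEv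
      have hodd : Odd (f j0) := Nat.odd_iff.2 (Nat.not_even_iff.1 hj0)
      have hj0T : j0 ∈ T := Finset.mem_filter.2 ⟨Finset.mem_univ _, by
        intro h; rw [h] at hj0; exact hj0 Even.zero⟩
      refine Finset.prod_eq_zero (Finset.mem_univ (⟨j0, hj0T⟩ : T)) ?_
      have : (fun ω => β j0 ω ^ f j0) = β j0 := by
        funext ω
        rcases hβval j0 ω with h | h <;> rw [h]
        · exact one_pow _
        · exact hodd.neg_one_pow
      rw [this]
      exact sign_integral_zero (hβmeas j0) (hβval j0) (hβdist j0)
  -- Step C : integrate the expansion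
  have hintg : ∀ f ∈ piAntidiag (univ : Finset (Fin n)) (2 * k),
      Integrable (fun ω => (Nat.multinomial univ f : ℝ) * ((∏ j, a j ^ f j) * P f ω)) μ := by
    intro f _
    exact (integrable_of_bdd (hPmeas f) (hPbd f)).const_mul _ |>.const_mul _
  have step1 : ∫ ω, (∑ j, a j * β j ω) ^ (2 * k) ∂μ =
      ∑ f ∈ piAntidiag (univ : Finset (Fin n)) (2 * k),
        (Nat.multinomial univ f : ℝ) * (∏ j, a j ^ f j) *
          (if ∀ j, Even (f j) then 1 else 0) := by
    rw [show (fun ω => (∑ j, a j * β j ω) ^ (2 * k)) = fun ω =>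
        ∑ f ∈ piAntidiag (univ : Finset (Fin n)) (2 * k),
          (Nat.multinomial univ f : ℝ) * ((∏ j, a j ^ f j) * P f ω) from funext expand]
    rw [integral_finset_sum _ hintg]
    refine Finset.sum_congr rfl fun f hf => ?_
    rw [integral_const_mul, integral_const_mul, hPint f hf, mul_assoc]
  -- Step E : restrict to even multi-indices
  have step2 : ∑ f ∈ piAntidiag (univ : Finset (Fin n)) (2 * k),
        (Nat.multinomial univ f : ℝ) * (∏ j, a j ^ f j) *
          (if ∀ j, Even (f j) then 1 else 0)
      = ∑ f ∈ (piAntidiag (univ : Finset (Fin n)) (2 * k)).filter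
          (fun f => ∀ j, Even (f j)),
          (Nat.multinomial univ f : ℝ) * ∏ j, a j ^ f j := by
    rw [Finset.sum_filter]
    refine Finset.sum_congr rfl fun f _ => ?_
    split_ifs <;> simp
  -- Step F : reindex by halving
  have step3 : ∑ f ∈ (piAntidiag (univ : Finset (Fin n)) (2 * k)).filter
          (fun f => ∀ j, Even (f j)),
          (Nat.multinomial univ f : ℝ) * ∏ j, a j ^ f j
      = ∑ g ∈ piAntidiag (univ : Finset (Fin n)) k,
          (Nat.multinomial univ (fun j => 2 * g j) : ℝ) * ∏ j, a j ^ (2 * g j) := by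
    refine Finset.sum_nbij' (fun f => fun j => f j / 2) (fun g => fun j => 2 * g j)
      ?_ ?_ ?_ ?_ ?_
    · intro f hf
      obtain ⟨hf1, hf2⟩ := Finset.mem_filter.1 hf
      obtain ⟨hsum, -⟩ := Finset.mem_piAntidiag.1 hf1
      refine Finset.mem_piAntidiag.2 ⟨?_, fun i _ => Finset.mem_univ i⟩
      have h2 : 2 * ∑ j, f j / 2 = 2 * k := by
        rw [Finset.mul_sum, ← hsum]
        exact Finset.sum_congr rfl fun j _ => Nat.mul_div_cancel' ((hf2 j).two_dvd)
      show (∑ j, f j / 2) = k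
      omega
    · intro g hg
      obtain ⟨hsum, -⟩ := Finset.mem_piAntidiag.1 hg
      refine Finset.mem_filter.2 ⟨Finset.mem_piAntidiag.2 ⟨?_, fun i _ => Finset.mem_univ i⟩,
        fun j => even_two_mul _⟩
      rw [← Finset.mul_sum, hsum]
    · intro f hf
      obtain ⟨-, hf2⟩ := Finset.mem_filter.1 hf
      funext j
      exact Nat.mul_div_cancel' ((hf2 j).two_dvd)
    · intro g _
      funext j
      exact Nat.mul_div_cancel_left _ (by norm_num)
    · intro f hf
      obtain ⟨-, hf2⟩ := Finset.mem_filter.1 hf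
      have key : ∀ j, 2 * (f j / 2) = f j := fun j => Nat.mul_div_cancel' ((hf2 j).two_dvd)
      simp only [key]
  -- Step G : per-term comparison
  have hkey : ∀ g ∈ piAntidiag (univ : Finset (Fin n)) k,
      (Nat.multinomial univ (fun j => 2 * g j) : ℝ) * ∏ j, a j ^ (2 * g j)
        ≤ ((2 * k)! : ℝ) / (2 ^ k * k !) *
            ((Nat.multinomial univ g : ℝ) * ∏ j, (a j ^ 2) ^ g j) := by
    intro g hg
    obtain ⟨sumg, -⟩ := Finset.mem_piAntidiag.1 hg
    have hprod_eq : ∏ j, a j ^ (2 * g j) = ∏ j, (a j ^ 2) ^ g j :=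
      Finset.prod_congr rfl fun j _ => by rw [← pow_mul]
    have hprod_nonneg : (0:ℝ) ≤ ∏ j, (a j ^ 2) ^ g j :=
      Finset.prod_nonneg fun j _ => pow_nonneg (sq_nonneg _) _
    rw [hprod_eq, ← mul_assoc]
    refine mul_le_mul_of_nonneg_right ?_ hprod_nonneg
    -- multinomial inequality
    have hs2 : ∑ j, 2 * g j = 2 * k := by rw [← Finset.mul_sum, sumg]
    have spec2 : (∏ j, ((2 * g j))!) * Nat.multinomial univ (fun j => 2 * g j) = (2 * k)! := by
      have h := Nat.multinomial_spec (univ : Finset (Fin n)) (fun j => 2 * g j)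
      rwa [hs2] at h
    have spec1 : (∏ j, (g j)!) * Nat.multinomial univ g = k ! := by
      have h := Nat.multinomial_spec (univ : Finset (Fin n)) g
      rwa [sumg] at h
    have hmid : 2 ^ k * ∏ j, (g j)! ≤ ∏ j, ((2 * g j))! := by
      have h2k : (2:ℕ) ^ k = ∏ j, 2 ^ g j := by rw [Finset.prod_pow_eq_pow_sum, sumg]
      rw [h2k, ← Finset.prod_mul_distrib]
      exact Finset.prod_le_prod' (fun j _ => two_pow_mul_factorial_le (g j))
    have hnat : Nat.multinomial univ (fun j => 2 * g j) * (2 ^ k * ∏ j, (g j)!) ≤ (2 * k)! := by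
      calc Nat.multinomial univ (fun j => 2 * g j) * (2 ^ k * ∏ j, (g j)!)
          ≤ Nat.multinomial univ (fun j => 2 * g j) * ∏ j, ((2 * g j))! :=
            Nat.mul_le_mul_left _ hmid
        _ = (2 * k)! := by rw [mul_comm]; exact spec2
    have hnat2 : Nat.multinomial univ (fun j => 2 * g j) * (2 ^ k * k !) ≤
        (2 * k)! * Nat.multinomial univ g := by
      calc Nat.multinomial univ (fun j => 2 * g j) * (2 ^ k * k !)
          = Nat.multinomial univ (fun j => 2 * g j) * (2 ^ k * ∏ j, (g j)!) *
              Nat.multinomial univ g := by rw [← spec1]; ring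
        _ ≤ (2 * k)! * Nat.multinomial univ g := Nat.mul_le_mul_right _ hnat
    have hpos : (0:ℝ) < 2 ^ k * (k ! : ℝ) := by positivity
    rw [div_mul_eq_mul_div, le_div_iff₀ hpos]
    exact_mod_cast hnat2
  -- Step H : put everything together
  calc ∫ ω, (∑ j, a j * β j ω) ^ (2 * k) ∂μ
      = ∑ g ∈ piAntidiag (univ : Finset (Fin n)) k,
          (Nat.multinomial univ (fun j => 2 * g j) : ℝ) * ∏ j, a j ^ (2 * g j) := by
        rw [step1, step2, step3]
    _ ≤ ∑ g ∈ piAntidiag (univ : Finset (Fin n)) k,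
          ((2 * k)! : ℝ) / (2 ^ k * k !) *
            ((Nat.multinomial univ g : ℝ) * ∏ j, (a j ^ 2) ^ g j) :=
        Finset.sum_le_sum hkey
    _ = ((2 * k)! : ℝ) / (2 ^ k * k !) * (∑ j, a j ^ 2) ^ k := by
        rw [← Finset.mul_sum, Finset.sum_pow_eq_sum_piAntidiag]

end Helpers

open Finset Nat

/-- If `u` is a unit vector of `ℝⁿ` (`n = 2^m` a power of two), `D = diag(β₁,…,βₙ)` is a
diagonal matrix of `l`-wise independent random signs (`l = 2⌈log(n/δ)⌉`), `H` is the
normalized Walsh–Hadamard matrix and `V = H·D·u`, then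
`Pr(‖V‖_∞ ≥ √(2e·log(2n/δ))/√n) ≤ δ`. -/
theorem hadamard_small_ell_infty
    {Ω : Type*} [MeasurableSpace Ω] (μ : Measure Ω) [IsProbabilityMeasure μ]
    (m : ℕ) (δ : ℝ) (hδ : δ ∈ Set.Ioo (0 : ℝ) (1 / 2))
    (β : Fin (2 ^ m) → Ω → ℝ)
    (hβmeas : ∀ j, Measurable (β j))
    (hβval : ∀ j ω, β j ω = 1 ∨ β j ω = -1)
    (hβdist : ∀ j, μ {ω | β j ω = 1} = 1 / 2)
    -- the `β`'s are `l`-wise independent with `l = 2⌈log(n/δ)⌉`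
    (hβindep : ∀ S : Finset (Fin (2 ^ m)),
      S.card ≤ 2 * ⌈Real.log ((2 ^ m : ℝ) / δ)⌉₊ →
      iIndepFun (fun j : S => β (j : Fin (2 ^ m))) μ)
    (u : Fin (2 ^ m) → ℝ) (hu : ∑ j, u j ^ 2 = 1) :
    μ {ω |
        let V : Fin (2 ^ m) → ℝ :=
          (WH m * Matrix.diagonal fun j => β j ω).mulVec u
        Real.sqrt (2 * Real.exp 1 * Real.log (2 * 2 ^ m / δ)) / Real.sqrt (2 ^ m) ≤
          ⨆ i, |V i|} ≤ ENNReal.ofReal δ := by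
  classical
  obtain ⟨hδ0, hδhalf⟩ := hδ
  set N : ℝ := (2 : ℝ) ^ m with hN_def
  set k : ℕ := ⌈Real.log ((2 ^ m : ℝ) / δ)⌉₊ with hk_def
  set L : ℝ := Real.log (2 * 2 ^ m / δ) with hL_def
  set t : ℝ := Real.sqrt (2 * Real.exp 1 * L) / Real.sqrt (2 ^ m) with ht_def
  have hNpos : (0 : ℝ) < N := by positivity
  have hN1 : (1 : ℝ) ≤ N := one_le_pow₀ (by norm_num)
  have hNδ1 : (1 : ℝ) < N / δ := by
    rw [lt_div_iff₀ hδ0]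
    nlinarith
  have hlogNδpos : 0 < Real.log (N / δ) := Real.log_pos hNδ1
  have hLpos : 0 < L := by
    rw [hL_def]
    apply Real.log_pos
    rw [lt_div_iff₀ hδ0]
    nlinarith
  have htpos : 0 < t := by
    rw [ht_def]
    apply _root_.div_pos (Real.sqrt_pos.2 (by positivity)) (Real.sqrt_pos.2 (by positivity))
  have hlog2 : (0.6931471803 : ℝ) < Real.log 2 := Real.log_two_gt_d9
  -- L = log 2 + log (N/δ)
  have hLsplit : L = Real.log 2 + Real.log (N / δ) := by
    rw [hL_def, show (2 : ℝ) * 2 ^ m / δ = 2 * (N / δ) by rw [hN_def]; ring,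
      Real.log_mul (by norm_num) (by positivity)]
  have hkge : Real.log (N / δ) ≤ (k : ℝ) := by
    rw [hk_def, hN_def]
    exact Nat.le_ceil _
  have hkle : (k : ℝ) ≤ 2 * L := by
    have h1 : (k : ℝ) < Real.log (N / δ) + 1 := by
      rw [hk_def, hN_def]
      exact Nat.ceil_lt_add_one (le_of_lt (by rw [← hN_def]; exact hlogNδpos))
    have h2 : Real.log 2 ≤ Real.log (N / δ) := by
      apply Real.log_le_log (by norm_num)
      rw [le_div_iff₀ hδ0]
      nlinarith
    nlinarith [hLsplit]
  -- the coordinate random variables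
  set X : Fin (2 ^ m) → Ω → ℝ := fun i ω => ∑ j, (WH m i j * u j) * β j ω with hX_def
  -- t ^ (2k) = ((2 L / N) ^ k) * exp 1 ^ k
  have ht2 : t ^ 2 = 2 * Real.exp 1 * L / N := by
    rw [ht_def, div_pow, Real.sq_sqrt (by positivity), Real.sq_sqrt (by positivity), hN_def]
  have htk : t ^ (2 * k) = (2 * L / N) ^ k * Real.exp 1 ^ k := by
    rw [pow_mul, ht2, ← mul_pow]
    congr 1
    field_simp
  have hexpk : N / δ ≤ Real.exp 1 ^ k := by
    rw [Real.exp_one_pow]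
    calc N / δ = Real.exp (Real.log (N / δ)) := (Real.exp_log (by positivity)).symm
      _ ≤ Real.exp k := Real.exp_le_exp.2 hkge
  -- per-coordinate bound
  have hXbound : ∀ i, μ {ω | t ≤ |X i ω|} ≤ ENNReal.ofReal (δ / N) := by
    intro i
    set a : Fin (2 ^ m) → ℝ := fun j => WH m i j * u j with ha_def
    have ha2 : ∑ j, a j ^ 2 = N⁻¹ := by
      rw [ha_def]
      calc ∑ j, (WH m i j * u j) ^ 2 = ∑ j, N⁻¹ * u j ^ 2 := by
            refine Finset.sum_congr rfl fun j _ => ?_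
            rw [mul_pow, WH_sq m i j, hN_def]
        _ = N⁻¹ := by rw [← Finset.mul_sum, hu, mul_one]
    have hmom := moment_bound μ β hβmeas hβval hβdist k hβindep a
    rw [ha2] at hmom
    have hXmeas : Measurable (X i) := by
      apply Finset.measurable_sum
      intro j _
      exact (hβmeas j).const_mul _
    have hβbd : ∀ j ω, |β j ω| ≤ 1 := fun j ω => by rcases hβval j ω with h | h <;> simp [h]
    have hXbd : ∀ ω, |X i ω| ≤ ∑ j, |a j| := by
      intro ω
      rw [hX_def]
      refine (Finset.abs_sum_le_sum_abs _ _).trans (Finset.sum_le_sum fun j _ => ?_)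
      rw [abs_mul]
      calc |a j| * |β j ω| ≤ |a j| * 1 :=
            mul_le_mul_of_nonneg_left (hβbd j ω) (abs_nonneg _)
        _ = |a j| := mul_one _
    have hintX : Integrable (fun ω => X i ω ^ (2 * k)) μ := by
      refine integrable_of_bdd (hXmeas.pow_const _) (C := (∑ j, |a j|) ^ (2 * k)) fun ω => ?_
      rw [abs_pow]
      exact pow_le_pow_left₀ (abs_nonneg _) (hXbd ω) _
    have hnonneg : (0 : Ω → ℝ) ≤ᵐ[μ] fun ω => X i ω ^ (2 * k) :=
      Filter.Eventually.of_forall fun ω => (even_two_mul k).pow_nonneg _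
    have hmarkov := mul_meas_ge_le_integral_of_nonneg hnonneg hintX (t ^ (2 * k))
    -- numeric chain
    have hC : ((2 * k)! : ℝ) / (2 ^ k * k !) ≤ (k : ℝ) ^ k := by
      rw [div_le_iff₀ (by positivity)]
      have h := _root_.factorial_two_mul_le k
      calc ((2 * k)! : ℝ) ≤ ((2 ^ k * k ! * k ^ k : ℕ) : ℝ) := by exact_mod_cast h
        _ = (k : ℝ) ^ k * (2 ^ k * k !) := by push_cast; ring
    have hchain : ((2 * k)! : ℝ) / (2 ^ k * k !) * (N⁻¹) ^ k ≤ t ^ (2 * k) * (δ / N) := by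
      calc ((2 * k)! : ℝ) / (2 ^ k * k !) * (N⁻¹) ^ k ≤ (2 * L) ^ k * (N⁻¹) ^ k := by
            refine mul_le_mul_of_nonneg_right (hC.trans ?_) (by positivity)
            exact pow_le_pow_left₀ (by positivity) hkle k
        _ = (2 * L / N) ^ k := by rw [← mul_pow, ← div_eq_mul_inv]
        _ = (2 * L / N) ^ k * ((N / δ) * (δ / N)) := by
            rw [show (N / δ) * (δ / N) = 1 by field_simp, mul_one]
        _ ≤ (2 * L / N) ^ k * (Real.exp 1 ^ k * (δ / N)) := by
            refine mul_le_mul_of_nonneg_left ?_ (by positivity)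
            exact mul_le_mul_of_nonneg_right hexpk (by positivity)
        _ = t ^ (2 * k) * (δ / N) := by rw [htk]; ring
    have htoReal : (μ {ω | t ^ (2 * k) ≤ X i ω ^ (2 * k)}).toReal ≤ δ / N := by
      have hpow : 0 < t ^ (2 * k) := by positivity
      have := hmarkov.trans (hmom.trans hchain)
      exact le_of_mul_le_mul_left this hpow
    have hsub : {ω | t ≤ |X i ω|} ⊆ {ω | t ^ (2 * k) ≤ X i ω ^ (2 * k)} := by
      intro ω hω
      simp only [Set.mem_setOf_eq] at hω ⊢
      calc t ^ (2 * k) ≤ |X i ω| ^ (2 * k) := pow_le_pow_left₀ htpos.le hω _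
        _ = X i ω ^ (2 * k) := (even_two_mul k).pow_abs _
    calc μ {ω | t ≤ |X i ω|} ≤ μ {ω | t ^ (2 * k) ≤ X i ω ^ (2 * k)} := measure_mono hsub
      _ = ENNReal.ofReal ((μ {ω | t ^ (2 * k) ≤ X i ω ^ (2 * k)}).toReal) :=
          (ENNReal.ofReal_toReal (measure_ne_top _ _)).symm
      _ ≤ ENNReal.ofReal (δ / N) := ENNReal.ofReal_le_ofReal htoReal
  -- identify V with X
  have hV : ∀ ω i, ((WH m * Matrix.diagonal fun j => β j ω).mulVec u) i = X i ω := by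
    intro ω i
    rw [← Matrix.mulVec_mulVec, hX_def]
    simp only [Matrix.mulVec, dotProduct, Matrix.diagonal_apply, ite_mul, zero_mul,
      Finset.sum_ite_eq, Finset.mem_univ, if_true]
    exact Finset.sum_congr rfl fun j _ => by ring
  -- union bound
  haveI : Nonempty (Fin (2 ^ m)) := ⟨⟨0, Nat.pow_pos (by norm_num)⟩⟩
  have hsubset : {ω : Ω |
        let V : Fin (2 ^ m) → ℝ :=
          (WH m * Matrix.diagonal fun j => β j ω).mulVec u
        Real.sqrt (2 * Real.exp 1 * Real.log (2 * 2 ^ m / δ)) / Real.sqrt (2 ^ m) ≤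
          ⨆ i, |V i|} ⊆ ⋃ i, {ω | t ≤ |X i ω|} := by
    intro ω hω
    simp only [Set.mem_setOf_eq] at hω
    obtain ⟨i0, hi0⟩ := exists_eq_ciSup_of_finite
      (f := fun i => |((WH m * Matrix.diagonal fun j => β j ω).mulVec u) i|)
    refine Set.mem_iUnion.2 ⟨i0, ?_⟩
    simp only [Set.mem_setOf_eq]
    rw [← hV ω i0]
    rw [hi0]
    exact hω
  calc μ _ ≤ μ (⋃ i, {ω | t ≤ |X i ω|}) := measure_mono hsubset
    _ ≤ ∑ i, μ {ω | t ≤ |X i ω|} := measure_iUnion_fintype_le _ _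
    _ ≤ ∑ _i : Fin (2 ^ m), ENNReal.ofReal (δ / N) := Finset.sum_le_sum fun i _ => hXbound i
    _ = ENNReal.ofReal δ := by
        rw [Finset.sum_const, Finset.card_univ, Fintype.card_fin, nsmul_eq_mul,
          ← ENNReal.ofReal_natCast (2 ^ m), ← ENNReal.ofReal_mul (by positivity)]
        congr 1
        have : ((2 ^ m : ℕ) : ℝ) = N := by rw [hN_def]; push_cast; ring
        rw [this]
        field_simp
end

section
/- (Bernstein inequality for a random sample without replacement) Let S = Σ_{i=1}^n ξ_i·Y_i. Then for all s > 0, Pr(S ≥ s) ≤ exp( −s²/(2(k/n)σ² + 2Ms) ) and Pr(S ≤ −s) ≤ exp( −s²/(2(k/n)σ² + 2Ms) ). -/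
open MeasureTheory ProbabilityTheory
open scoped ENNReal NNReal

section BernsteinAux
open Finset Real

open Finset

lemma bern_term_le {n k i : ℕ} (hkn : k ≤ n) : n * (k - i) ≤ k * (n - i) := by
  rcases le_or_gt i k with h | h
  · have hin : i ≤ n := h.trans hkn
    calc n * (k - i) = (n - i) * (k - i) + i * (k - i) := by
          rw [← Nat.add_mul, Nat.sub_add_cancel hin]
      _ ≤ (n - i) * (k - i) + i * (n - i) :=
          Nat.add_le_add_left (Nat.mul_le_mul_left i (Nat.sub_le_sub_right hkn i)) _
      _ = k * (n - i) := by
          rw [Nat.mul_comm (n - i), ← Nat.add_mul, Nat.sub_add_cancel h, Nat.mul_comm]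
  · simp [Nat.sub_eq_zero_of_le h.le]

lemma bern_choose_nat {n k m : ℕ} (hmk : m ≤ k) (hkn : k ≤ n) :
    (n - m).choose (k - m) * n ^ m * k.factorial ≤ n.choose k * k ^ m * k.factorial := by
  have hkfac : (k - m).factorial * k.descFactorial m = k.factorial :=
    Nat.factorial_mul_descFactorial hmk
  have hsplit : (n - m).descFactorial (k - m) * n.descFactorial m = n.descFactorial k :=
    Nat.descFactorial_mul_descFactorial hmk
  have h1 : (n - m).descFactorial (k - m) = (k - m).factorial * (n - m).choose (k - m) :=
    Nat.descFactorial_eq_factorial_mul_choose _ _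
  have h2 : n.descFactorial k = k.factorial * n.choose k :=
    Nat.descFactorial_eq_factorial_mul_choose _ _
  have hprod : n ^ m * k.descFactorial m ≤ k ^ m * n.descFactorial m := by
    have e1 : n ^ m * ∏ i ∈ range m, (k - i) = ∏ i ∈ range m, n * (k - i) := by
      rw [Finset.prod_mul_distrib, Finset.prod_const, card_range]
    have e2 : k ^ m * ∏ i ∈ range m, (n - i) = ∏ i ∈ range m, k * (n - i) := by
      rw [Finset.prod_mul_distrib, Finset.prod_const, card_range]
    rw [Nat.descFactorial_eq_prod_range, Nat.descFactorial_eq_prod_range, e1, e2]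
    exact Finset.prod_le_prod' fun i _ => bern_term_le hkn
  calc (n - m).choose (k - m) * n ^ m * k.factorial
      = (n - m).choose (k - m) * (k - m).factorial * (n ^ m * k.descFactorial m) := by
        rw [← hkfac]; ring
    _ ≤ (n - m).choose (k - m) * (k - m).factorial * (k ^ m * n.descFactorial m) :=
        Nat.mul_le_mul_left _ hprod
    _ = (n - m).descFactorial (k - m) * n.descFactorial m * k ^ m := by
        rw [h1]; ring
    _ = n.descFactorial k * k ^ m := by rw [hsplit]
    _ = n.choose k * k ^ m * k.factorial := by rw [h2]; ring

lemma bern_choose_real {n k m : ℕ} (hmk : m ≤ k) (hkn : k ≤ n) (hk : 1 ≤ k) :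
    ((n - m).choose (k - m) : ℝ) ≤ ((k : ℝ) / n) ^ m * n.choose k := by
  have hn : (0 : ℝ) < n := by
    have h1 : 1 ≤ n := hk.trans hkn
    exact_mod_cast Nat.lt_of_lt_of_le Nat.zero_lt_one h1
  have hnat : (n - m).choose (k - m) * n ^ m ≤ n.choose k * k ^ m :=
    Nat.le_of_mul_le_mul_right (bern_choose_nat hmk hkn) k.factorial_pos
  have hcast : ((n - m).choose (k - m) : ℝ) * (n : ℝ) ^ m ≤ (n.choose k : ℝ) * (k : ℝ) ^ m := by
    exact_mod_cast hnat
  have hnm : (0:ℝ) < (n:ℝ) ^ m := by positivity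
  have he : ((k : ℝ) / n) ^ m * n.choose k = (n.choose k : ℝ) * (k:ℝ) ^ m / (n:ℝ) ^ m := by
    rw [div_pow]; ring
  rw [he, le_div_iff₀ hnm]
  exact hcast

lemma bern_esymm_le {n : ℕ} (b : Fin n → ℝ) (hb : ∀ i, 0 ≤ b i) :
    ∀ m : ℕ, (m.factorial : ℝ) *
        ∑ T ∈ powersetCard m (univ : Finset (Fin n)), ∏ i ∈ T, b i ≤ (∑ i, b i) ^ m := by
  have hB : 0 ≤ ∑ i, b i := Finset.sum_nonneg fun i _ => hb i
  intro m
  induction m with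
  | zero => simp
  | succ m ih =>
    have key : ((m + 1 : ℕ) : ℝ) *
        ∑ T ∈ powersetCard (m + 1) (univ : Finset (Fin n)), ∏ i ∈ T, b i ≤
        (∑ i, b i) * ∑ T ∈ powersetCard m (univ : Finset (Fin n)), ∏ i ∈ T, b i := by
      have e1 : ((m + 1 : ℕ) : ℝ) *
          ∑ T ∈ powersetCard (m + 1) (univ : Finset (Fin n)), ∏ i ∈ T, b i =
          ∑ T ∈ powersetCard (m + 1) (univ : Finset (Fin n)), ∑ i ∈ T, ∏ j ∈ T, b j := by
        rw [Finset.mul_sum]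
        refine Finset.sum_congr rfl fun T hT => ?_
        rw [Finset.sum_const, nsmul_eq_mul, (Finset.mem_powersetCard.1 hT).2]
      have e2 : ∑ T ∈ powersetCard (m + 1) (univ : Finset (Fin n)), ∑ i ∈ T, ∏ j ∈ T, b j =
          ∑ T ∈ powersetCard m (univ : Finset (Fin n)), ∑ i ∈ univ \ T,
            (b i * ∏ j ∈ T, b j) := by
        rw [Finset.sum_sigma', Finset.sum_sigma']
        refine Finset.sum_nbij' (fun p => ⟨p.1.erase p.2, p.2⟩)
          (fun p => ⟨insert p.2 p.1, p.2⟩) ?_ ?_ ?_ ?_ ?_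
        · rintro ⟨T, i⟩ hp
          simp only [Finset.mem_sigma, Finset.mem_powersetCard] at hp ⊢
          obtain ⟨⟨hTs, hTc⟩, hi⟩ := hp
          refine ⟨⟨(Finset.erase_subset _ _).trans hTs, ?_⟩, ?_⟩
          · rw [Finset.card_erase_of_mem hi, hTc]; rfl
          · simp [Finset.mem_erase]
        · rintro ⟨T, i⟩ hp
          simp only [Finset.mem_sigma, Finset.mem_powersetCard, Finset.mem_sdiff,
            Finset.mem_univ, true_and] at hp ⊢
          obtain ⟨⟨hTs, hTc⟩, hi⟩ := hp
          exact ⟨⟨Finset.insert_subset_iff.2 ⟨Finset.mem_univ _, hTs⟩,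
            by rw [Finset.card_insert_of_notMem hi, hTc]⟩, Finset.mem_insert_self _ _⟩
        · rintro ⟨T, i⟩ hp
          simp only [Finset.mem_sigma] at hp
          simp [Finset.insert_erase hp.2]
        · rintro ⟨T, i⟩ hp
          simp only [Finset.mem_sigma, Finset.mem_sdiff] at hp
          simp [Finset.erase_insert hp.2.2]
        · rintro ⟨T, i⟩ hp
          simp only [Finset.mem_sigma] at hp
          exact (Finset.mul_prod_erase T b hp.2).symm
      rw [e1, e2]
      calc ∑ T ∈ powersetCard m (univ : Finset (Fin n)), ∑ i ∈ univ \ T,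
              (b i * ∏ j ∈ T, b j)
          ≤ ∑ T ∈ powersetCard m (univ : Finset (Fin n)), ∑ i ∈ (univ : Finset (Fin n)),
              (b i * ∏ j ∈ T, b j) := by
            refine Finset.sum_le_sum fun T hT => ?_
            refine Finset.sum_le_sum_of_subset_of_nonneg (Finset.sdiff_subset) fun i _ _ => ?_
            exact mul_nonneg (hb i) (Finset.prod_nonneg fun j _ => hb j)
        _ = (∑ i, b i) * ∑ T ∈ powersetCard m (univ : Finset (Fin n)), ∏ i ∈ T, b i := by
            rw [Finset.mul_sum]
            refine Finset.sum_congr rfl fun T hT => ?_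
            rw [← Finset.sum_mul]
        _ ≤ _ := le_refl _
    have hfac : ((m + 1).factorial : ℝ) = ((m + 1 : ℕ) : ℝ) * (m.factorial : ℝ) := by
      rw [Nat.factorial_succ]; push_cast; ring
    calc ((m + 1).factorial : ℝ) * ∑ T ∈ powersetCard (m + 1) (univ : Finset (Fin n)),
            ∏ i ∈ T, b i
        = (m.factorial : ℝ) * (((m + 1 : ℕ) : ℝ) *
            ∑ T ∈ powersetCard (m + 1) (univ : Finset (Fin n)), ∏ i ∈ T, b i) := by
          rw [hfac]; ring
      _ ≤ (m.factorial : ℝ) * ((∑ i, b i) *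
            ∑ T ∈ powersetCard m (univ : Finset (Fin n)), ∏ i ∈ T, b i) := by
          refine mul_le_mul_of_nonneg_left key ?_
          positivity
      _ = (∑ i, b i) * ((m.factorial : ℝ) *
            ∑ T ∈ powersetCard m (univ : Finset (Fin n)), ∏ i ∈ T, b i) := by ring
      _ ≤ (∑ i, b i) * (∑ i, b i) ^ m := mul_le_mul_of_nonneg_left ih hB
      _ = (∑ i, b i) ^ (m + 1) := by ring

lemma bern_count {n k : ℕ} (T : Finset (Fin n)) (hT : T.card ≤ k) :
    ((powersetCard k (univ : Finset (Fin n))).filter (fun J => T ⊆ J)).card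
      = (n - T.card).choose (k - T.card) := by
  have h : ((powersetCard k (univ : Finset (Fin n))).filter (fun J => T ⊆ J)).card
      = (powersetCard (k - T.card) ((univ : Finset (Fin n)) \ T)).card := by
    refine Finset.card_nbij' (fun J => J \ T) (fun U => U ∪ T) ?_ ?_ ?_ ?_
    · intro J hJ
      simp only [Finset.mem_coe, Finset.mem_filter, Finset.mem_powersetCard] at hJ ⊢
      obtain ⟨⟨hJs, hJc⟩, hTJ⟩ := hJ
      exact ⟨Finset.sdiff_subset_sdiff hJs (le_refl _),
        by rw [Finset.card_sdiff_of_subset hTJ, hJc]⟩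
    · intro U hU
      simp only [Finset.mem_coe, Finset.mem_filter, Finset.mem_powersetCard, Finset.mem_sdiff] at hU ⊢
      obtain ⟨hUs, hUc⟩ := hU
      have hdisj : Disjoint U T := Finset.disjoint_left.2 fun a ha =>
        ((Finset.mem_sdiff.1 (hUs ha)).2)
      refine ⟨⟨Finset.subset_univ _, ?_⟩, Finset.subset_union_right⟩
      rw [Finset.card_union_of_disjoint hdisj, hUc]
      omega
    · intro J hJ
      simp only [Finset.mem_coe, Finset.mem_filter] at hJ
      exact Finset.sdiff_union_of_subset hJ.2
    · intro U hU
      simp only [Finset.mem_coe, Finset.mem_powersetCard] at hU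
      have hdisj : Disjoint U T := Finset.disjoint_left.2 fun a ha =>
        ((Finset.mem_sdiff.1 (hU.1 ha)).2)
      exact Finset.union_sdiff_cancel_right hdisj
  rw [h, Finset.card_powersetCard, Finset.card_sdiff_of_subset (Finset.subset_univ _), Finset.card_univ,
    Fintype.card_fin]

lemma bern_avg_prod_le {n k : ℕ} (hk : 1 ≤ k) (hkn : k ≤ n) (b : Fin n → ℝ)
    (hb : ∀ i, 0 ≤ b i) :
    ∑ J ∈ powersetCard k (univ : Finset (Fin n)), ∏ i ∈ J, (1 + b i)
      ≤ (n.choose k : ℝ) * Real.exp (((k : ℝ) / n) * ∑ i, b i) := by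
  have hB : 0 ≤ ∑ i, b i := Finset.sum_nonneg fun i _ => hb i
  have hn : (1 : ℕ) ≤ n := hk.trans hkn
  have hkn' : 0 ≤ (k : ℝ) / n := by positivity
  have h1 : ∀ J : Finset (Fin n), ∏ i ∈ J, (1 + b i) = ∑ T ∈ J.powerset, ∏ i ∈ T, b i := by
    intro J
    have : ∀ i, 1 + b i = b i + 1 := fun i => add_comm _ _
    simp_rw [this]
    rw [Finset.prod_add]
    exact Finset.sum_congr rfl fun T hT => by simp
  simp_rw [h1]
  -- swap the two sums
  have h2 : ∑ J ∈ powersetCard k (univ : Finset (Fin n)), ∑ T ∈ J.powerset, ∏ i ∈ T, b i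
      = ∑ T ∈ (univ : Finset (Fin n)).powerset,
          ∑ J ∈ (powersetCard k (univ : Finset (Fin n))).filter (fun J => T ⊆ J),
            ∏ i ∈ T, b i := by
    refine Finset.sum_comm' fun J T => ?_
    simp only [Finset.mem_powersetCard, Finset.mem_powerset, Finset.mem_filter]
    constructor
    · rintro ⟨hJ, hT⟩; exact ⟨⟨hJ, hT⟩, Finset.subset_univ _⟩
    · rintro ⟨⟨hJ, hT⟩, _⟩; exact ⟨hJ, hT⟩
  rw [h2]
  have h3 : ∀ T : Finset (Fin n),
      ∑ J ∈ (powersetCard k (univ : Finset (Fin n))).filter (fun J => T ⊆ J), ∏ i ∈ T, b i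
      = (((powersetCard k (univ : Finset (Fin n))).filter (fun J => T ⊆ J)).card : ℝ) *
          ∏ i ∈ T, b i := by
    intro T; rw [Finset.sum_const, nsmul_eq_mul]
  simp_rw [h3]
  rw [Finset.sum_powerset]
  have hstep : ∀ m ∈ Finset.range (Finset.card (univ : Finset (Fin n)) + 1),
      ∑ T ∈ powersetCard m (univ : Finset (Fin n)),
        ((((powersetCard k (univ : Finset (Fin n))).filter (fun J => T ⊆ J)).card : ℝ) *
          ∏ i ∈ T, b i)
      ≤ (n.choose k : ℝ) * (((k : ℝ) / n) * ∑ i, b i) ^ m / m.factorial := by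
    intro m _
    rcases le_or_gt m k with hmk | hmk
    · have hbound : ∀ T ∈ powersetCard m (univ : Finset (Fin n)),
          ((((powersetCard k (univ : Finset (Fin n))).filter (fun J => T ⊆ J)).card : ℝ) *
            ∏ i ∈ T, b i)
          ≤ (((k : ℝ) / n) ^ m * n.choose k) * ∏ i ∈ T, b i := by
        intro T hT
        have hTc : T.card = m := (Finset.mem_powersetCard.1 hT).2
        refine mul_le_mul_of_nonneg_right ?_ (Finset.prod_nonneg fun i _ => hb i)
        rw [bern_count T (hTc ▸ hmk), hTc]
        exact bern_choose_real hmk hkn hk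
      calc ∑ T ∈ powersetCard m (univ : Finset (Fin n)),
              ((((powersetCard k (univ : Finset (Fin n))).filter (fun J => T ⊆ J)).card : ℝ) *
                ∏ i ∈ T, b i)
          ≤ ∑ T ∈ powersetCard m (univ : Finset (Fin n)),
              ((((k : ℝ) / n) ^ m * n.choose k) * ∏ i ∈ T, b i) :=
            Finset.sum_le_sum hbound
        _ = (((k : ℝ) / n) ^ m * n.choose k) *
              ∑ T ∈ powersetCard m (univ : Finset (Fin n)), ∏ i ∈ T, b i := by
            rw [Finset.mul_sum]
        _ ≤ (((k : ℝ) / n) ^ m * n.choose k) * ((∑ i, b i) ^ m / m.factorial) := by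
            refine mul_le_mul_of_nonneg_left ?_ (by positivity)
            rw [div_eq_inv_mul, ← mul_le_mul_iff_right₀
              (by positivity : (0:ℝ) < (m.factorial : ℝ)), ← mul_assoc,
              mul_inv_cancel₀ (by positivity : (m.factorial : ℝ) ≠ 0), one_mul]
            exact bern_esymm_le b hb m
        _ = (n.choose k : ℝ) * (((k : ℝ) / n) * ∑ i, b i) ^ m / m.factorial := by
            rw [mul_pow]; ring
    · have hz : ∀ T ∈ powersetCard m (univ : Finset (Fin n)),
          ((powersetCard k (univ : Finset (Fin n))).filter (fun J => T ⊆ J)) = ∅ := by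
        intro T hT
        rw [Finset.filter_eq_empty_iff]
        intro J hJ hTJ
        have h1 : T.card ≤ J.card := Finset.card_le_card hTJ
        rw [(Finset.mem_powersetCard.1 hT).2, (Finset.mem_powersetCard.1 hJ).2] at h1
        omega
      have : ∑ T ∈ powersetCard m (univ : Finset (Fin n)),
          ((((powersetCard k (univ : Finset (Fin n))).filter (fun J => T ⊆ J)).card : ℝ) *
            ∏ i ∈ T, b i) = 0 := by
        refine Finset.sum_eq_zero fun T hT => ?_
        rw [hz T hT]
        simp
      rw [this]
      positivity
  calc ∑ m ∈ Finset.range (Finset.card (univ : Finset (Fin n)) + 1),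
        ∑ T ∈ powersetCard m (univ : Finset (Fin n)),
          ((((powersetCard k (univ : Finset (Fin n))).filter (fun J => T ⊆ J)).card : ℝ) *
            ∏ i ∈ T, b i)
      ≤ ∑ m ∈ Finset.range (Finset.card (univ : Finset (Fin n)) + 1),
          (n.choose k : ℝ) * (((k : ℝ) / n) * ∑ i, b i) ^ m / m.factorial :=
        Finset.sum_le_sum hstep
    _ = (n.choose k : ℝ) * ∑ m ∈ Finset.range (Finset.card (univ : Finset (Fin n)) + 1),
          (((k : ℝ) / n) * ∑ i, b i) ^ m / m.factorial := by
        have : ∀ m : ℕ, (n.choose k : ℝ) * (((k : ℝ) / n) * ∑ i, b i) ^ m / m.factorial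
            = (n.choose k : ℝ) * ((((k : ℝ) / n) * ∑ i, b i) ^ m / m.factorial) := by
          intro m; ring
        simp_rw [this]
        rw [← Finset.mul_sum]
    _ ≤ (n.choose k : ℝ) * Real.exp (((k : ℝ) / n) * ∑ i, b i) := by
        refine mul_le_mul_of_nonneg_left ?_ (by positivity)
        exact Real.sum_le_exp_of_nonneg (by positivity) _


open MeasureTheory ProbabilityTheory Real
open scoped ENNReal NNReal

lemma bern_exp_le (x : ℝ) : Real.exp x ≤ 1 + x + (Real.exp |x| - 1 - |x|) := by
  rcases le_or_gt 0 x with h | h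
  · rw [abs_of_nonneg h]; ring_nf; exact le_refl _
  · rw [abs_of_neg h]
    have hu : 0 ≤ -x := by linarith
    have hsinh : -x ≤ Real.sinh (-x) := Real.self_le_sinh_iff.2 hu
    rw [Real.sinh_eq] at hsinh
    have : Real.exp x - Real.exp (-x) ≤ 2 * x := by
      rw [Real.exp_neg] at hsinh ⊢
      have := hsinh
      rw [neg_neg] at this
      nlinarith [Real.exp_pos x]
    linarith

lemma bern_exp_sub_eq (y : ℝ) :
    Real.exp y - 1 - y = ∑' p : ℕ, y ^ (p + 2) / (p + 2).factorial := by
  have hsum : Summable (fun n : ℕ => y ^ n / n.factorial) := Real.summable_pow_div_factorial y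
  have hexp : Real.exp y = ∑' n : ℕ, y ^ n / n.factorial := by
    rw [Real.exp_eq_exp_ℝ, NormedSpace.exp_eq_tsum_div]
  have h2 : (∑ i ∈ Finset.range 2, y ^ i / i.factorial) +
      ∑' p : ℕ, y ^ (p + 2) / (p + 2).factorial = ∑' n : ℕ, y ^ n / n.factorial :=
    Summable.sum_add_tsum_nat_add 2 hsum
  have h3 : (∑ i ∈ Finset.range 2, y ^ i / i.factorial) = 1 + y := by
    simp [Finset.sum_range_succ]
  rw [hexp, ← h2, h3]; ring

lemma bern_mgf_bound {Ω : Type*} [MeasurableSpace Ω] (μ : Measure Ω) [IsProbabilityMeasure μ]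
    (X : Ω → ℝ) (hXm : Measurable X) (hXmom : ∀ p : ℕ, Integrable (fun ω => |X ω| ^ p) μ)
    (hXmean : ∫ ω, X ω ∂μ = 0) (M σ : ℝ) (hM : 0 < M) (hσ : 0 ≤ σ)
    (hmom : ∀ p : ℕ, 2 ≤ p → ∫ ω, |X ω| ^ p ∂μ ≤ (p.factorial : ℝ) / 2 * σ * M ^ (p - 2))
    (t : ℝ) (ht : 0 < t) (htM : t * M < 1) :
    Integrable (fun ω => Real.exp (t * X ω)) μ ∧
      ∫ ω, Real.exp (t * X ω) ∂μ ≤ 1 + t ^ 2 * σ / (2 * (1 - t * M)) := by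
  set b : ℝ := t ^ 2 * σ / (2 * (1 - t * M)) with hbdef
  have h1tM : 0 < 1 - t * M := by linarith
  have hb0 : 0 ≤ b := by positivity
  set g : Ω → ℝ := fun ω => Real.exp (t * |X ω|) - 1 - t * |X ω| with hgdef
  have hg0 : ∀ ω, 0 ≤ g ω := by
    intro ω
    have := Real.add_one_le_exp (t * |X ω|)
    simp only [hgdef]
    linarith
  have hgmeas : Measurable g := by
    fun_prop
  -- the series decomposition of g
  have hgser : ∀ ω, g ω = ∑' p : ℕ, (t * |X ω|) ^ (p + 2) / (p + 2).factorial := by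
    intro ω
    simp only [hgdef]
    exact bern_exp_sub_eq (t * |X ω|)
  -- lintegral bound
  have hint_term : ∀ p : ℕ, Integrable (fun ω => (t * |X ω|) ^ (p + 2) / (p + 2).factorial) μ := by
    intro p
    have : (fun ω => (t * |X ω|) ^ (p + 2) / (p + 2).factorial)
        = fun ω => (t ^ (p + 2) / (p + 2).factorial) * |X ω| ^ (p + 2) := by
      funext ω; rw [mul_pow]; ring
    rw [this]
    exact (hXmom (p + 2)).const_mul _
  have hterm_nonneg : ∀ p : ℕ, ∀ ω, 0 ≤ (t * |X ω|) ^ (p + 2) / (p + 2).factorial := by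
    intro p ω; positivity
  have hterm_bound : ∀ p : ℕ,
      ∫ ω, (t * |X ω|) ^ (p + 2) / (p + 2).factorial ∂μ ≤ t ^ 2 * σ / 2 * (t * M) ^ p := by
    intro p
    have e : (fun ω => (t * |X ω|) ^ (p + 2) / (p + 2).factorial)
        = fun ω => (t ^ (p + 2) / (p + 2).factorial) * |X ω| ^ (p + 2) := by
      funext ω; rw [mul_pow]; ring
    rw [e, integral_const_mul]
    have hm := hmom (p + 2) (by omega)
    have hp2 : (p + 2) - 2 = p := by omega
    rw [hp2] at hm
    calc t ^ (p + 2) / ((p + 2).factorial : ℝ) * ∫ ω, |X ω| ^ (p + 2) ∂μ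
        ≤ t ^ (p + 2) / ((p + 2).factorial : ℝ) * (((p + 2).factorial : ℝ) / 2 * σ * M ^ p) := by
          refine mul_le_mul_of_nonneg_left hm (by positivity)
      _ = t ^ 2 * σ / 2 * (t * M) ^ p := by
          have hfac : ((p + 2).factorial : ℝ) ≠ 0 := by positivity
          field_simp
          ring
  -- geometric series bound
  have hgeo_sum : Summable (fun p : ℕ => t ^ 2 * σ / 2 * (t * M) ^ p) :=
    (summable_geometric_of_lt_one (by positivity) htM).mul_left _
  have hgeo_val : ∑' p : ℕ, t ^ 2 * σ / 2 * (t * M) ^ p = b := by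
    rw [tsum_mul_left, tsum_geometric_of_lt_one (by positivity) htM, hbdef]
    field_simp
  -- lintegral of g
  have hlin : ∫⁻ ω, ENNReal.ofReal (g ω) ∂μ ≤ ENNReal.ofReal b := by
    have hsummable : ∀ ω, Summable (fun p : ℕ => (t * |X ω|) ^ (p + 2) / (p + 2).factorial) :=
      fun ω => (summable_nat_add_iff 2).2 (Real.summable_pow_div_factorial (t * |X ω|))
    have h1 : ∀ ω, ENNReal.ofReal (g ω)
        = ∑' p : ℕ, ENNReal.ofReal ((t * |X ω|) ^ (p + 2) / (p + 2).factorial) := by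
      intro ω
      rw [hgser ω]
      exact ENNReal.ofReal_tsum_of_nonneg (fun p => hterm_nonneg p ω) (hsummable ω)
    calc ∫⁻ ω, ENNReal.ofReal (g ω) ∂μ
        = ∫⁻ ω, ∑' p : ℕ, ENNReal.ofReal ((t * |X ω|) ^ (p + 2) / (p + 2).factorial) ∂μ := by
          exact lintegral_congr fun ω => h1 ω
      _ = ∑' p : ℕ, ∫⁻ ω, ENNReal.ofReal ((t * |X ω|) ^ (p + 2) / (p + 2).factorial) ∂μ := by
          refine lintegral_tsum fun p => ?_
          exact (Measurable.ennreal_ofReal (by fun_prop)).aemeasurable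
      _ = ∑' p : ℕ, ENNReal.ofReal (∫ ω, (t * |X ω|) ^ (p + 2) / (p + 2).factorial ∂μ) := by
          refine tsum_congr fun p => ?_
          rw [ofReal_integral_eq_lintegral_ofReal (hint_term p)
            (Filter.Eventually.of_forall fun ω => hterm_nonneg p ω)]
      _ ≤ ∑' p : ℕ, ENNReal.ofReal (t ^ 2 * σ / 2 * (t * M) ^ p) :=
          ENNReal.tsum_le_tsum fun p => ENNReal.ofReal_le_ofReal (hterm_bound p)
      _ = ENNReal.ofReal (∑' p : ℕ, t ^ 2 * σ / 2 * (t * M) ^ p) := by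
          rw [ENNReal.ofReal_tsum_of_nonneg (fun p => by positivity) hgeo_sum]
      _ = ENNReal.ofReal b := by rw [hgeo_val]
  -- integrability of g
  have hgint : Integrable g μ := by
    refine ⟨hgmeas.aestronglyMeasurable, ?_⟩
    rw [hasFiniteIntegral_iff_norm]
    have : ∀ ω, ENNReal.ofReal ‖g ω‖ = ENNReal.ofReal (g ω) := by
      intro ω; rw [Real.norm_eq_abs, abs_of_nonneg (hg0 ω)]
    calc ∫⁻ ω, ENNReal.ofReal ‖g ω‖ ∂μ = ∫⁻ ω, ENNReal.ofReal (g ω) ∂μ :=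
          lintegral_congr fun ω => this ω
      _ ≤ ENNReal.ofReal b := hlin
      _ < ⊤ := ENNReal.ofReal_lt_top
  -- ∫ g ≤ b
  have hgle : ∫ ω, g ω ∂μ ≤ b := by
    have h1 : ENNReal.ofReal (∫ ω, g ω ∂μ) ≤ ENNReal.ofReal b := by
      rw [ofReal_integral_eq_lintegral_ofReal hgint
        (Filter.Eventually.of_forall fun ω => hg0 ω)]
      exact hlin
    have h2 : 0 ≤ ∫ ω, g ω ∂μ := integral_nonneg fun ω => hg0 ω
    rwa [ENNReal.ofReal_le_ofReal_iff hb0] at h1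
  -- X integrable
  have hXint : Integrable X μ := by
    have h1 : Integrable (fun ω => |X ω|) μ := by simpa using hXmom 1
    exact h1.mono' hXm.aestronglyMeasurable
      (Filter.Eventually.of_forall fun ω => by simp [Real.norm_eq_abs])
  -- pointwise domination
  have hdom : ∀ ω, Real.exp (t * X ω) ≤ 1 + t * X ω + g ω := by
    intro ω
    have := bern_exp_le (t * X ω)
    have habs : |t * X ω| = t * |X ω| := by rw [abs_mul, abs_of_pos ht]
    rw [habs] at this
    simpa only [hgdef] using this
  have hRHSint : Integrable (fun ω => 1 + t * X ω + g ω) μ :=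
    ((integrable_const (1 : ℝ)).add (hXint.const_mul t)).add hgint
  have hexpint : Integrable (fun ω => Real.exp (t * X ω)) μ := by
    refine Integrable.mono' hRHSint ((hXm.const_mul t).exp.aestronglyMeasurable) (Filter.Eventually.of_forall fun ω => ?_)
    rw [Real.norm_eq_abs, abs_of_pos (Real.exp_pos _)]
    exact hdom ω
  refine ⟨hexpint, ?_⟩
  calc ∫ ω, Real.exp (t * X ω) ∂μ ≤ ∫ ω, (1 + t * X ω + g ω) ∂μ :=
        integral_mono hexpint hRHSint fun ω => hdom ω
    _ = 1 + t * ∫ ω, X ω ∂μ + ∫ ω, g ω ∂μ := by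
        have hc : Integrable (fun ω => 1 + t * X ω) μ := by
          exact (integrable_const 1).add (hXint.const_mul t)
        have hc2 : Integrable (fun ω => t * X ω) μ := hXint.const_mul t
        rw [integral_add hc hgint, integral_add (integrable_const (1 : ℝ)) hc2,
          integral_const, integral_const_mul]
        simp
    _ = 1 + ∫ ω, g ω ∂μ := by rw [hXmean]; ring
    _ ≤ 1 + b := by linarith


open MeasureTheory ProbabilityTheory Real Finset
open scoped ENNReal NNReal

theorem bern_upper_tail
    {Ω : Type*} [MeasurableSpace Ω] (μ : Measure Ω) [IsProbabilityMeasure μ]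
    (n k : ℕ) (hk : 1 ≤ k) (hkn : k ≤ n)
    (Y : Fin n → Ω → ℝ)
    (hYmeas : ∀ i, Measurable (Y i))
    (hYindep : iIndepFun Y μ)
    (hYmom : ∀ i, ∀ p : ℕ, Integrable (fun ω => |Y i ω| ^ p) μ)
    (hYmean : ∀ i, ∫ ω, Y i ω ∂μ = 0)
    (M : ℝ) (hM : 0 < M) (σ2 : Fin n → ℝ) (hσ2 : ∀ i, 0 < σ2 i)
    (hmom : ∀ i, ∀ p : ℕ, 2 ≤ p →
      ∫ ω, |Y i ω| ^ p ∂μ ≤ (p.factorial : ℝ) / 2 * σ2 i * M ^ (p - 2))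
    (ξ : Fin n → Ω → ℝ)
    (hξmeas : ∀ j, Measurable (ξ j))
    (hξval : ∀ j ω, ξ j ω = 0 ∨ ξ j ω = 1)
    (hξdist : ∀ J : Finset (Fin n), J.card = k →
      μ {ω | ∀ j, ξ j ω = if j ∈ J then 1 else 0} = ((n.choose k : ℝ≥0∞))⁻¹)
    (hξY : IndepFun (fun ω => fun j => ξ j ω) (fun ω => fun i => Y i ω) μ)
    (s : ℝ) (hs : 0 < s) :
    μ {ω | s ≤ ∑ i, ξ i ω * Y i ω} ≤
        ENNReal.ofReal
          (Real.exp (-(s ^ 2) / (2 * ((k : ℝ) / n) * ∑ i, σ2 i + 2 * M * s))) := by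
  have hn : 1 ≤ n := hk.trans hkn
  have hn0 : (0 : ℝ) < n := by exact_mod_cast Nat.lt_of_lt_of_le Nat.zero_lt_one hn
  set σsq : ℝ := ∑ i, σ2 i with hσsq
  have hσsq_pos : 0 < σsq := by
    refine Finset.sum_pos (fun i _ => hσ2 i) ?_
    exact Finset.univ_nonempty_iff.2 ⟨⟨0, by omega⟩⟩
  set V : ℝ := (k : ℝ) / n * σsq with hV
  have hVpos : 0 < V := by
    have : (0:ℝ) < (k:ℝ) / n := by positivity
    exact mul_pos this hσsq_pos
  have hden : 0 < V + M * s := by positivity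
  set t : ℝ := s / (V + M * s) with ht
  have ht0 : 0 < t := by positivity
  have htM : t * M < 1 := by
    rw [ht, div_mul_eq_mul_div, div_lt_one hden]
    nlinarith
  have h1tM : 1 - t * M = V / (V + M * s) := by
    rw [ht]; field_simp; ring
  have h1tM_pos : 0 < 1 - t * M := by rw [h1tM]; positivity
  -- per-coordinate mgf bounds
  set b : Fin n → ℝ := fun i => t ^ 2 * σ2 i / (2 * (1 - t * M)) with hb
  have hb0 : ∀ i, 0 ≤ b i := fun i => by
    have := (hσ2 i).le
    positivity
  have hmgf : ∀ i, Integrable (fun ω => Real.exp (t * Y i ω)) μ ∧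
      ∫ ω, Real.exp (t * Y i ω) ∂μ ≤ 1 + b i := fun i =>
    bern_mgf_bound μ (Y i) (hYmeas i) (hYmom i) (hYmean i) M (σ2 i) hM (hσ2 i).le
      (hmom i) t ht0 htM
  set φ : Fin n → ℝ := fun i => ∫ ω, Real.exp (t * Y i ω) ∂μ with hφ
  have hφ0 : ∀ i, 0 ≤ φ i := fun i => integral_nonneg fun ω => (Real.exp_pos _).le
  have hφle : ∀ i, φ i ≤ 1 + b i := fun i => (hmgf i).2
  -- the events
  set A : Finset (Fin n) → Set Ω :=
    fun J => {ω | ∀ j, ξ j ω = if j ∈ J then 1 else 0} with hA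
  have hAmeas : ∀ J, MeasurableSet (A J) := by
    intro J
    have : A J = ⋂ j, (ξ j) ⁻¹' {if j ∈ J then (1:ℝ) else 0} := by
      ext ω; simp [hA, Set.mem_iInter]
    rw [this]
    exact MeasurableSet.iInter fun j => (hξmeas j) (measurableSet_singleton _)
  set P : Finset (Finset (Fin n)) := powersetCard k (univ : Finset (Fin n)) with hP
  have hcardP : P.card = n.choose k := by
    rw [hP, Finset.card_powersetCard, Finset.card_univ, Fintype.card_fin]
  have hμA : ∀ J ∈ P, μ (A J) = ((n.choose k : ℝ≥0∞))⁻¹ := fun J hJ =>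
    hξdist J (Finset.mem_powersetCard.1 hJ).2
  have hdisj : ∀ J ∈ P, ∀ J' ∈ P, J ≠ J' → Disjoint (A J) (A J') := by
    intro J _ J' _ hne
    rw [Set.disjoint_left]
    intro ω h1 h2
    refine hne (Finset.ext fun j => ?_)
    have e1 := h1 j
    have e2 := h2 j
    by_cases hj : j ∈ J <;> by_cases hj' : j ∈ J' <;>
      simp only [hj, hj', if_true, if_false] at e1 e2 <;> first
        | tauto
        | (exfalso; rw [e1] at e2; norm_num at e2)
        | (exfalso; rw [e2] at e1; norm_num at e1)
  have hC0 : (n.choose k : ℝ≥0∞) ≠ 0 := by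
    exact_mod_cast (Nat.choose_pos hkn).ne'
  have hCtop : (n.choose k : ℝ≥0∞) ≠ ⊤ := ENNReal.natCast_ne_top _
  -- the union has full measure
  set U : Set Ω := ⋃ J ∈ P, A J with hU
  have hUmeas : MeasurableSet U := by
    exact MeasurableSet.biUnion P.countable_toSet fun J _ => hAmeas J
  have hμU : μ U = 1 := by
    rw [hU, measure_biUnion_finset ?_ fun J _ => hAmeas J]
    · rw [Finset.sum_congr rfl hμA, Finset.sum_const, hcardP, nsmul_eq_mul]
      exact ENNReal.mul_inv_cancel (by simpa using hC0) hCtop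
    · intro J hJ J' hJ' hne
      exact hdisj J hJ J' hJ' hne
  have hUc : μ Uᶜ = 0 := by
    rw [measure_compl hUmeas (measure_ne_top μ _), hμU, measure_univ, tsub_self]
  -- the decomposition function
  set S : Ω → ℝ := fun ω => ∑ i, ξ i ω * Y i ω with hS
  set h : Finset (Fin n) → Ω → ℝ := fun J ω => Real.exp (t * ∑ i ∈ J, Y i ω) with hh
  set F : Ω → ℝ := fun ω => ∑ J ∈ P, (A J).indicator (h J) ω with hF
  have hSJ : ∀ J, ∀ ω ∈ A J, S ω = ∑ i ∈ J, Y i ω := by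
    intro J ω hω
    rw [hS]
    calc ∑ i, ξ i ω * Y i ω = ∑ i, (if i ∈ J then Y i ω else 0) := by
          refine Finset.sum_congr rfl fun i _ => ?_
          rw [hω i]
          by_cases hi : i ∈ J <;> simp [hi]
      _ = ∑ i ∈ J, Y i ω := by
          rw [Finset.sum_ite_mem, Finset.univ_inter]
  have haeF : (fun ω => Real.exp (t * S ω)) =ᵐ[μ] F := by
    refine Filter.eventuallyEq_of_mem ((mem_ae_iff.2 ?_) : U ∈ ae μ) ?_
    · exact hUc
    · intro ω hω
      rw [hU] at hω
      simp only [Set.mem_iUnion] at hω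
      obtain ⟨J, hJP, hωJ⟩ := hω
      have hFval : F ω = h J ω := by
        show ∑ J' ∈ P, (A J').indicator (h J') ω = h J ω
        rw [Finset.sum_eq_single J]
        · exact Set.indicator_of_mem hωJ _
        · intro J' hJ' hne
          refine Set.indicator_of_notMem ?_ _
          intro hωJ'
          exact (Set.disjoint_left.1 (hdisj J' hJ' J hJP hne) hωJ') hωJ
        · intro hJP'; exact absurd hJP hJP'
      rw [hFval, hh]
      simp only []
      rw [hSJ J ω hωJ]
  -- integrability of each piece
  have hhint : ∀ J ∈ P, Integrable (h J) μ := by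
    intro J _
    have := hYindep.integrable_exp_mul_sum hYmeas (s := J) fun i _ => (hmgf i).1
    refine this.congr (Filter.Eventually.of_forall fun ω => ?_)
    rw [hh]
    simp [Finset.sum_apply]
  have hFint : Integrable F μ := by
    refine integrable_finset_sum P fun J hJ => ?_
    exact (hhint J hJ).indicator (hAmeas J)
  have hexpSint : Integrable (fun ω => Real.exp (t * S ω)) μ := hFint.congr haeF.symm
  -- independence factorization
  have hpiece : ∀ J ∈ P, ∫ ω, (A J).indicator (h J) ω ∂μ
      = ((n.choose k : ℝ))⁻¹ * ∏ i ∈ J, φ i := by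
    intro J hJ
    set B : Set (Fin n → ℝ) := {x | ∀ j, x j = if j ∈ J then 1 else 0} with hB
    have hBmeas : MeasurableSet B := by
      have : B = ⋂ j, (fun x : Fin n → ℝ => x j) ⁻¹' {if j ∈ J then (1:ℝ) else 0} := by
        ext x; simp [hB, Set.mem_iInter]
      rw [this]
      exact MeasurableSet.iInter fun j => (measurable_pi_apply j) (measurableSet_singleton _)
    set f : (Fin n → ℝ) → ℝ := B.indicator (fun _ => 1) with hf
    set g : (Fin n → ℝ) → ℝ := fun x => Real.exp (t * ∑ i ∈ J, x i) with hg
    have hfmeas : Measurable f := measurable_const.indicator hBmeas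
    have hgmeas : Measurable g := by
      have h1 : Measurable fun x : Fin n → ℝ => ∑ i ∈ J, x i :=
        Finset.measurable_sum J fun i _ => measurable_pi_apply i
      exact Real.measurable_exp.comp (h1.const_mul t)
    have hind : IndepFun (fun ω => f (fun j => ξ j ω)) (fun ω => g (fun i => Y i ω)) μ :=
      hξY.comp hfmeas hgmeas
    have hfI : (fun ω => f (fun j => ξ j ω)) = (A J).indicator (fun _ => (1:ℝ)) := by
      funext ω
      show B.indicator (fun _ => (1:ℝ)) (fun j => ξ j ω) = (A J).indicator (fun _ => (1:ℝ)) ω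
      by_cases hω : ∀ j, ξ j ω = if j ∈ J then (1:ℝ) else 0
      · rw [Set.indicator_of_mem (show (fun j => ξ j ω) ∈ B from hω),
          Set.indicator_of_mem (show ω ∈ A J from hω)]
      · rw [Set.indicator_of_notMem (show ¬ (fun j => ξ j ω) ∈ B from hω),
          Set.indicator_of_notMem (show ¬ ω ∈ A J from hω)]
    have hgY : (fun ω => g (fun i => Y i ω)) = h J := by
      funext ω; rw [hg, hh]
    have hfint : Integrable (fun ω => f (fun j => ξ j ω)) μ := by
      rw [hfI]
      exact (integrable_const 1).indicator (hAmeas J)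
    have hgint : Integrable (fun ω => g (fun i => Y i ω)) μ := by
      rw [hgY]; exact hhint J hJ
    have hmul : ∫ ω, (fun ω => f (fun j => ξ j ω)) ω * (fun ω => g (fun i => Y i ω)) ω ∂μ
        = (∫ ω, f (fun j => ξ j ω) ∂μ) * ∫ ω, g (fun i => Y i ω) ∂μ :=
      hind.integral_fun_mul_eq_mul_integral hfint.aestronglyMeasurable hgint.aestronglyMeasurable
    have hprod_eq : (A J).indicator (h J) = fun ω =>
        (fun ω => f (fun j => ξ j ω)) ω * (fun ω => g (fun i => Y i ω)) ω := by
      rw [hfI, hgY]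
      funext ω
      by_cases hω : ω ∈ A J
      · rw [Set.indicator_of_mem hω, Set.indicator_of_mem hω]; ring
      · rw [Set.indicator_of_notMem hω, Set.indicator_of_notMem hω]; ring
    rw [hprod_eq, hmul]
    -- first factor
    have hfval : ∫ ω, f (fun j => ξ j ω) ∂μ = ((n.choose k : ℝ))⁻¹ := by
      have e1 : ∫ ω, f (fun j => ξ j ω) ∂μ = ∫ ω, (A J).indicator (fun _ => (1:ℝ)) ω ∂μ := by
        rw [hfI]
      rw [e1, integral_indicator_const (1:ℝ) (hAmeas J), measureReal_def, hμA J hJ, smul_eq_mul, mul_one,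
        ENNReal.toReal_inv]
      norm_num
    -- second factor
    have hgval : ∫ ω, g (fun i => Y i ω) ∂μ = ∏ i ∈ J, φ i := by
      rw [hgY]
      have hmgfsum := hYindep.mgf_sum hYmeas J (t := t)
      rw [hh]
      have e1 : ∫ ω, Real.exp (t * ∑ i ∈ J, Y i ω) ∂μ = mgf (∑ i ∈ J, Y i) μ t := by
        rw [mgf]
        refine integral_congr_ae (Filter.Eventually.of_forall fun ω => ?_)
        simp [Finset.sum_apply]
      rw [e1, hmgfsum]
      exact Finset.prod_congr rfl fun i _ => rfl
    rw [hfval, hgval]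
  -- chernoff
  have hchern := measure_ge_le_exp_mul_mgf (μ := μ) (X := S) (t := t) s ht0.le hexpSint
  have hmgfS : mgf S μ t ≤ Real.exp (((k:ℝ)/n) * ∑ i, b i) := by
    have e1 : mgf S μ t = ∫ ω, F ω ∂μ := integral_congr_ae haeF
    have e2 : ∫ ω, F ω ∂μ = ∑ J ∈ P, ((n.choose k : ℝ))⁻¹ * ∏ i ∈ J, φ i := by
      rw [hF, integral_finset_sum P fun J hJ => (hhint J hJ).indicator (hAmeas J)]
      exact Finset.sum_congr rfl hpiece
    rw [e1, e2]
    have hCpos : (0:ℝ) < (n.choose k : ℝ) := by exact_mod_cast Nat.choose_pos hkn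
    calc ∑ J ∈ P, ((n.choose k : ℝ))⁻¹ * ∏ i ∈ J, φ i
        ≤ ∑ J ∈ P, ((n.choose k : ℝ))⁻¹ * ∏ i ∈ J, (1 + b i) := by
          refine Finset.sum_le_sum fun J _ => ?_
          refine mul_le_mul_of_nonneg_left ?_ (by positivity)
          exact Finset.prod_le_prod (fun i _ => hφ0 i) (fun i _ => hφle i)
      _ = ((n.choose k : ℝ))⁻¹ * ∑ J ∈ P, ∏ i ∈ J, (1 + b i) := by
          rw [Finset.mul_sum]
      _ ≤ ((n.choose k : ℝ))⁻¹ * ((n.choose k : ℝ) * Real.exp (((k:ℝ)/n) * ∑ i, b i)) := by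
          refine mul_le_mul_of_nonneg_left ?_ (by positivity)
          exact bern_avg_prod_le hk hkn b hb0
      _ = Real.exp (((k:ℝ)/n) * ∑ i, b i) := by
          field_simp
  -- the exponent computation
  have hsumb : ∑ i, b i = t ^ 2 * σsq / (2 * (1 - t * M)) := by
    rw [hb, hσsq]
    rw [← Finset.sum_div, ← Finset.mul_sum]
  have hexp_eq : -t * s + ((k:ℝ)/n) * (t ^ 2 * σsq / (2 * (1 - t * M)))
      = -(s ^ 2) / (2 * ((k : ℝ) / n) * σsq + 2 * M * s) := by
    have hd2 : 2 * ((k : ℝ) / n) * σsq + 2 * M * s = 2 * (V + M * s) := by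
      rw [hV]; ring
    have hkn_eq : ((k:ℝ)/n) * (t ^ 2 * σsq / (2 * (1 - t * M)))
        = t ^ 2 * V / (2 * (1 - t * M)) := by rw [hV]; ring
    rw [hd2, hkn_eq, h1tM, ht]
    have hV0 : V ≠ 0 := hVpos.ne'
    have hden0 : V + M * s ≠ 0 := hden.ne'
    field_simp
    ring
  calc μ {ω | s ≤ ∑ i, ξ i ω * Y i ω} = μ {ω | s ≤ S ω} := rfl
    _ ≤ ENNReal.ofReal (Real.exp (-t * s) * mgf S μ t) := by
        rw [← ENNReal.ofReal_toReal (measure_ne_top μ {ω | s ≤ S ω})]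
        exact ENNReal.ofReal_le_ofReal hchern
    _ ≤ ENNReal.ofReal (Real.exp (-(s ^ 2) / (2 * ((k : ℝ) / n) * σsq + 2 * M * s))) := by
        refine ENNReal.ofReal_le_ofReal ?_
        calc Real.exp (-t * s) * mgf S μ t
            ≤ Real.exp (-t * s) * Real.exp (((k:ℝ)/n) * ∑ i, b i) := by
              refine mul_le_mul_of_nonneg_left hmgfS (Real.exp_pos _).le
          _ = Real.exp (-t * s + ((k:ℝ)/n) * ∑ i, b i) := by rw [← Real.exp_add]
          _ = Real.exp (-(s ^ 2) / (2 * ((k : ℝ) / n) * σsq + 2 * M * s)) := by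
              rw [hsumb, hexp_eq]

end BernsteinAux

/-- **Bernstein inequality for a random sample (without replacement) from a family of
independent random variables.**
Let `Y₁,…,Yₙ` be independent centered random variables with
`E|Yᵢ|^p ≤ (p!/2)·σᵢ²·M^(p−2)` for all integers `p ≥ 2`, and let `ξ₁,…,ξₙ` be `0–1`
random variables, independent of the `Yᵢ`'s, such that `{j : ξⱼ = 1}` is uniformly
distributed over all `k`-element subsets of `{1,…,n}`. With `σ² = ∑ σᵢ²` and
`S = ∑ ξᵢ Yᵢ`, for all `s > 0`,
`Pr(S ≥ s) ≤ exp(−s²/(2(k/n)σ² + 2Ms))` and `Pr(S ≤ −s) ≤ exp(−s²/(2(k/n)σ² + 2Ms))`. -/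
theorem bernstein_inequality_random_sample
    {Ω : Type*} [MeasurableSpace Ω] (μ : Measure Ω) [IsProbabilityMeasure μ]
    (n k : ℕ) (hk : 1 ≤ k) (hkn : k ≤ n)
    (Y : Fin n → Ω → ℝ)
    (hYmeas : ∀ i, Measurable (Y i))
    (hYindep : iIndepFun Y μ)
    (hYmom : ∀ i, ∀ p : ℕ, Integrable (fun ω => |Y i ω| ^ p) μ)
    (hYmean : ∀ i, ∫ ω, Y i ω ∂μ = 0)
    (M : ℝ) (hM : 0 < M) (σ2 : Fin n → ℝ) (hσ2 : ∀ i, 0 < σ2 i)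
    (hmom : ∀ i, ∀ p : ℕ, 2 ≤ p →
      ∫ ω, |Y i ω| ^ p ∂μ ≤ (p.factorial : ℝ) / 2 * σ2 i * M ^ (p - 2))
    (ξ : Fin n → Ω → ℝ)
    (hξmeas : ∀ j, Measurable (ξ j))
    (hξval : ∀ j ω, ξ j ω = 0 ∨ ξ j ω = 1)
    (hξdist : ∀ J : Finset (Fin n), J.card = k →
      μ {ω | ∀ j, ξ j ω = if j ∈ J then 1 else 0} = ((n.choose k : ℝ≥0∞))⁻¹)
    (hξY : IndepFun (fun ω => fun j => ξ j ω) (fun ω => fun i => Y i ω) μ)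
    (s : ℝ) (hs : 0 < s) :
    μ {ω | s ≤ ∑ i, ξ i ω * Y i ω} ≤
        ENNReal.ofReal
          (Real.exp (-(s ^ 2) / (2 * ((k : ℝ) / n) * ∑ i, σ2 i + 2 * M * s))) ∧
      μ {ω | ∑ i, ξ i ω * Y i ω ≤ -s} ≤
        ENNReal.ofReal
          (Real.exp (-(s ^ 2) / (2 * ((k : ℝ) / n) * ∑ i, σ2 i + 2 * M * s))) := by
  constructor
  · exact bern_upper_tail μ n k hk hkn Y hYmeas hYindep hYmom hYmean M hM σ2 hσ2 hmom
      ξ hξmeas hξval hξdist hξY s hs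
  · -- apply the upper tail to -Y
    set Y' : Fin n → Ω → ℝ := fun i ω => -Y i ω with hY'
    have hY'meas : ∀ i, Measurable (Y' i) := fun i => (hYmeas i).neg
    have hY'indep : iIndepFun Y' μ := by
      have := hYindep.comp (fun _ => (fun x : ℝ => -x)) (fun _ => measurable_neg)
      exact this
    have hY'mom : ∀ i, ∀ p : ℕ, Integrable (fun ω => |Y' i ω| ^ p) μ := by
      intro i p
      simpa [hY', abs_neg] using hYmom i p
    have hY'mean : ∀ i, ∫ ω, Y' i ω ∂μ = 0 := by
      intro i
      rw [hY']
      simp only []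
      rw [integral_neg, hYmean i, neg_zero]
    have hmom' : ∀ i, ∀ p : ℕ, 2 ≤ p →
        ∫ ω, |Y' i ω| ^ p ∂μ ≤ (p.factorial : ℝ) / 2 * σ2 i * M ^ (p - 2) := by
      intro i p hp
      simpa [hY', abs_neg] using hmom i p hp
    have hξY' : IndepFun (fun ω => fun j => ξ j ω) (fun ω => fun i => Y' i ω) μ := by
      have hneg : Measurable (fun x : Fin n → ℝ => fun i => -x i) :=
        measurable_pi_lambda _ fun i => (measurable_pi_apply i).neg
      have := hξY.comp measurable_id hneg
      exact this
    have h1 := bern_upper_tail μ n k hk hkn Y' hY'meas hY'indep hY'mom hY'mean M hM σ2 hσ2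
      hmom' ξ hξmeas hξval hξdist hξY' s hs
    have hset : {ω | ∑ i, ξ i ω * Y i ω ≤ -s} = {ω | s ≤ ∑ i, ξ i ω * Y' i ω} := by
      ext ω
      simp only [Set.mem_setOf_eq, hY', mul_neg, Finset.sum_neg_distrib]
      constructor
      · intro hω; linarith
      · intro hω; linarith
    rw [hset]
    exact h1
end

section
/- For every s > 0, Pr( |W| ≥ s ) ≤ 2·exp( − s² / (2 + (2/3)·(n/k)^{1/2}·α·s) ). -/
open MeasureTheory ProbabilityTheory
open scoped ENNReal NNReal

lemma zineq (k : ℕ) (z : ℝ) (hz : 0 ≤ z) :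
    z ^ k * ((k + 1) - k * z) ≤ 1 := by
  induction k with
  | zero => simp
  | succ k ih =>
    have key : z ^ (k+1) * ((k+1+1) - (k+1)*z)
        = z * (z ^ k * ((k + 1) - k * z)) + z ^ (k+1) * (1 - z) := by
      push_cast; ring
    have h1 : z * (z ^ k * ((k + 1) - k * z)) ≤ z :=
      by nlinarith [mul_le_mul_of_nonneg_left ih hz]
    have h2 : z ^ (k+1) * (1 - z) ≤ 1 - z := by
      rcases le_total z 1 with h | h
      · have : z ^ (k+1) ≤ 1 := pow_le_one₀ hz h
        nlinarith
      · have : 1 ≤ z ^ (k+1) := one_le_pow₀ h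
        nlinarith
    push_cast
    calc z ^ (k+1) * (((k:ℝ)+1+1) - ((k:ℝ)+1)*z)
        = z * (z ^ k * (((k:ℝ) + 1) - (k:ℝ) * z)) + z ^ (k+1) * (1 - z) := by ring
      _ ≤ z + (1 - z) := add_le_add h1 h2
      _ = 1 := by ring

lemma amgm (k : ℕ) (a b : ℝ) (ha : 0 ≤ a) (hb : 0 ≤ b) :
    ((k : ℝ) + 1) ^ (k + 1) * (a ^ k * b) ≤ ((k : ℝ) * a + b) ^ (k + 1) := by
  set T : ℝ := (k : ℝ) * a + b with hT
  have hT0 : 0 ≤ T := by positivity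
  rcases hT0.eq_or_lt with h | h
  · -- T = 0 : then k*a = 0 and b = 0
    have hb0 : b = 0 := by nlinarith [mul_nonneg (Nat.cast_nonneg (α := ℝ) k) ha]
    simp [hb0, ← h]
  · have hz : (0:ℝ) ≤ ((k:ℝ)+1) * a / T := by positivity
    have := zineq k (((k:ℝ)+1) * a / T) hz
    have hfac : ((k:ℝ) + 1) - k * (((k:ℝ)+1) * a / T) = ((k:ℝ)+1) * b / T := by
      field_simp
      ring
    rw [hfac] at this
    have hTk : (0:ℝ) < T ^ (k+1) := by positivity
    rw [div_pow, mul_pow] at this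
    have h2 : (((k:ℝ)+1)^k * a ^ k / T ^ k) * (((k:ℝ)+1) * b / T) ≤ 1 := this
    have h3 : (((k:ℝ)+1)^k * a ^ k / T ^ k) * (((k:ℝ)+1) * b / T)
        = ((k:ℝ)+1)^(k+1) * (a ^ k * b) / T ^ (k+1) := by
      field_simp
      ring
    rw [h3, div_le_one hTk] at h2
    exact h2

lemma maclaurin {ι : Type*} [DecidableEq ι] (s : Finset ι) (k : ℕ) (y : ι → ℝ)
    (hy : ∀ i ∈ s, 0 ≤ y i) :
    (s.card : ℝ) ^ k * ∑ J ∈ s.powersetCard k, ∏ j ∈ J, y j ≤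
      (s.card.choose k : ℝ) * (∑ i ∈ s, y i) ^ k := by
  induction s using Finset.induction_on generalizing k with
  | empty =>
    cases k with
    | zero => simp
    | succ k => simp [Finset.powersetCard_eq_empty.mpr (show (∅:Finset ι).card < k+1 by simp)]
  | insert a t hat ih =>
    have hx : 0 ≤ y a := hy a (Finset.mem_insert_self a t)
    have hyt : ∀ i ∈ t, 0 ≤ y i := fun i hi => hy i (Finset.mem_insert_of_mem hi)
    have hcard : (insert a t).card = t.card + 1 := Finset.card_insert_of_notMem hat
    set x := y a with hxdef
    set S' := ∑ i ∈ t, y i with hS'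
    have hS'0 : 0 ≤ S' := Finset.sum_nonneg hyt
    have hsum : ∑ i ∈ insert a t, y i = x + S' := Finset.sum_insert hat
    cases k with
    | zero => simp [Finset.powersetCard_zero]
    | succ k =>
      have hdec : ∑ J ∈ (insert a t).powersetCard (k+1), ∏ j ∈ J, y j
          = (∑ J ∈ t.powersetCard (k+1), ∏ j ∈ J, y j)
            + x * ∑ J ∈ t.powersetCard k, ∏ j ∈ J, y j := by
        rw [Finset.powersetCard_succ_insert hat]
        rw [Finset.sum_union]
        · congr 1
          rw [Finset.sum_image]
          · rw [Finset.mul_sum]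
            refine Finset.sum_congr rfl fun J hJ => ?_
            have haJ : a ∉ J := fun hc => hat (Finset.mem_powersetCard.mp hJ |>.1 hc)
            rw [Finset.prod_insert haJ]
          · intro J1 h1 J2 h2 he
            have h1' : a ∉ J1 := fun hc => hat (Finset.mem_powersetCard.mp h1 |>.1 hc)
            have h2' : a ∉ J2 := fun hc => hat (Finset.mem_powersetCard.mp h2 |>.1 hc)
            have := congrArg (Finset.erase · a) he
            simpa [Finset.erase_insert h1', Finset.erase_insert h2'] using this
        · rw [Finset.disjoint_left]
          intro J hJ hJ'
          have h1 : a ∉ J := fun hc => hat (Finset.mem_powersetCard.mp hJ |>.1 hc)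
          obtain ⟨J', hJ', rfl⟩ := Finset.mem_image.mp hJ'
          exact h1 (Finset.mem_insert_self a J')
      set E1 := ∑ J ∈ t.powersetCard (k+1), ∏ j ∈ J, y j with hE1def
      set E2 := ∑ J ∈ t.powersetCard k, ∏ j ∈ J, y j with hE2def
      have hE1nn : 0 ≤ E1 := Finset.sum_nonneg fun J hJ => Finset.prod_nonneg fun j hj =>
        hyt j (Finset.mem_powersetCard.mp hJ |>.1 hj)
      have hE2nn : 0 ≤ E2 := Finset.sum_nonneg fun J hJ => Finset.prod_nonneg fun j hj =>
        hyt j (Finset.mem_powersetCard.mp hJ |>.1 hj)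
      have IH1 := ih (k+1) hyt
      have IH2 := ih k hyt
      have hE1Z : t.card < k + 1 → E1 = 0 := fun h => by
        rw [hE1def, Finset.powersetCard_eq_empty.mpr h, Finset.sum_empty]
      have hE2Z : t.card < k → E2 = 0 := fun h => by
        rw [hE2def, Finset.powersetCard_eq_empty.mpr h, Finset.sum_empty]
      rw [hcard, hdec, hsum]
      rw [← hE1def] at IH1
      rw [← hE2def] at IH2
      generalize hm : t.card = m at IH1 IH2 hE1Z hE2Z ⊢
      rcases lt_or_ge m (k+1) with hlt | hle
      · have hE1z : E1 = 0 := hE1Z hlt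
        rcases lt_or_ge m k with hltk | hlek
        · have hE2z : E2 = 0 := hE2Z hltk
          have hch : (m+1).choose (k+1) = 0 := Nat.choose_eq_zero_of_lt (by omega)
          rw [hE1z, hE2z, hch]
          simp
        · have hkm : k = m := by omega
          subst hkm
          have hch : (k+1).choose (k+1) = 1 := Nat.choose_self _
          rw [hE1z, hch]
          have hE2' : (k:ℝ)^k * E2 ≤ S'^k := by
            simpa [Nat.choose_self] using IH2
          rcases Nat.eq_zero_or_pos k with hk0 | hkpos
          · subst hk0
            simp only [pow_zero, one_mul] at hE2' ⊢
            push_cast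
            nlinarith
          · have hkR : (0:ℝ) < (k:ℝ)^k := by positivity
            set A := S' / (k:ℝ) with hA
            have hkR0 : (0:ℝ) < (k:ℝ) := by exact_mod_cast hkpos
            have hAnn : 0 ≤ A := by positivity
            have hSA : S' = (k:ℝ) * A := by rw [hA]; field_simp
            have hE2A : E2 ≤ A ^ k := by
              have h1 : (k:ℝ)^k * E2 ≤ (k:ℝ)^k * A^k := by
                calc (k:ℝ)^k * E2 ≤ S'^k := hE2'
                  _ = (k:ℝ)^k * A^k := by rw [hSA]; ring
              exact le_of_mul_le_mul_left h1 hkR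
            have am := amgm k A x hAnn hx
            push_cast
            rw [one_mul]
            calc ((k:ℝ)+1)^(k+1) * (0 + x * E2) ≤ ((k:ℝ)+1)^(k+1) * (A^k * x) := by
                  have h2 : x * E2 ≤ x * A^k := mul_le_mul_of_nonneg_left hE2A hx
                  nlinarith [pow_nonneg (by positivity : (0:ℝ) ≤ (k:ℝ)+1) (k+1)]
              _ ≤ ((k:ℝ)*A + x)^(k+1) := am
              _ = (x + S')^(k+1) := by rw [hSA]; ring_nf
      · -- main case : k+1 ≤ m
        have hmpos : 0 < m := by omega
        have hmR : (0:ℝ) < (m:ℝ) := by exact_mod_cast hmpos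
        set A := S' / (m:ℝ) with hA
        have hAnn : 0 ≤ A := by positivity
        have hSA : S' = (m:ℝ) * A := by rw [hA]; field_simp
        have hE1A : E1 ≤ (m.choose (k+1) : ℝ) * A^(k+1) := by
          have hp : (0:ℝ) < (m:ℝ)^(k+1) := by positivity
          have h1 : (m:ℝ)^(k+1) * E1 ≤ (m:ℝ)^(k+1) * ((m.choose (k+1):ℝ) * A^(k+1)) := by
            calc (m:ℝ)^(k+1) * E1 ≤ (m.choose (k+1):ℝ) * S'^(k+1) := IH1
              _ = (m:ℝ)^(k+1) * ((m.choose (k+1):ℝ) * A^(k+1)) := by rw [hSA]; ring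
          exact le_of_mul_le_mul_left h1 hp
        have hE2A : E2 ≤ (m.choose k : ℝ) * A^k := by
          have hp : (0:ℝ) < (m:ℝ)^k := by positivity
          have h1 : (m:ℝ)^k * E2 ≤ (m:ℝ)^k * ((m.choose k:ℝ) * A^k) := by
            calc (m:ℝ)^k * E2 ≤ (m.choose k:ℝ) * S'^k := IH2
              _ = (m:ℝ)^k * ((m.choose k:ℝ) * A^k) := by rw [hSA]; ring
          exact le_of_mul_le_mul_left h1 hp
        set d : ℝ := (m:ℝ) - (k:ℝ) with hd
        have hdpos : (0:ℝ) < d := by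
          rw [hd]
          have : (k:ℝ) < (m:ℝ) := by exact_mod_cast (by omega : k < m)
          linarith
        have c1 : d * ((m+1).choose (k+1) : ℝ) = ((m:ℝ)+1) * (m.choose (k+1) : ℝ) := by
          have hnat := Nat.choose_mul_succ_eq m (k+1)
          have hc : ((m.choose (k+1) * (m+1) : ℕ) : ℝ) = (((m+1).choose (k+1) * (m + 1 - (k+1)) : ℕ) : ℝ) := by
            exact_mod_cast congrArg (Nat.cast (R := ℝ)) hnat
          have hsub : (m + 1 - (k+1) : ℕ) = m - k := by omega
          rw [hsub] at hc
          push_cast [Nat.cast_sub (show k ≤ m by omega)] at hc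
          rw [hd]; linear_combination -hc
        have c2 : d * (m.choose k : ℝ) = ((k:ℝ)+1) * (m.choose (k+1) : ℝ) := by
          have hnat := Nat.choose_succ_right_eq m k
          have hc : ((m.choose (k+1) * (k+1) : ℕ) : ℝ) = ((m.choose k * (m - k) : ℕ) : ℝ) := by
            exact_mod_cast congrArg (Nat.cast (R := ℝ)) hnat
          push_cast [Nat.cast_sub (show k ≤ m by omega)] at hc
          rw [hd]; linear_combination -hc
        have key : ((m:ℝ)+1)^k * (d * A^(k+1) + ((k:ℝ)+1) * x * A^k) ≤ ((m:ℝ)*A + x)^(k+1) := by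
          have am := amgm k (((m:ℝ)+1)*A) (d*A + ((k:ℝ)+1)*x)
            (by positivity) (by positivity)
          have e1 : (k:ℝ)*(((m:ℝ)+1)*A) + (d*A + ((k:ℝ)+1)*x) = ((k:ℝ)+1)*((m:ℝ)*A + x) := by
            rw [hd]; ring
          have e2 : (((k:ℝ)+1)*((m:ℝ)*A+x))^(k+1) = ((k:ℝ)+1)^(k+1) * ((m:ℝ)*A+x)^(k+1) :=
            mul_pow _ _ _
          rw [e1, e2] at am
          have hKpos : (0:ℝ) < ((k:ℝ)+1)^(k+1) := by positivity
          have am2 : (((m:ℝ)+1)*A)^k * (d*A + ((k:ℝ)+1)*x) ≤ ((m:ℝ)*A + x)^(k+1) :=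
            le_of_mul_le_mul_left am hKpos
          calc ((m:ℝ)+1)^k * (d * A^(k+1) + ((k:ℝ)+1) * x * A^k)
              = (((m:ℝ)+1)*A)^k * (d*A + ((k:ℝ)+1)*x) := by rw [mul_pow]; ring
            _ ≤ ((m:ℝ)*A + x)^(k+1) := am2
        have step : d * (((m:ℝ)+1)^(k+1) * ((m.choose (k+1):ℝ) * A^(k+1) + x * ((m.choose k:ℝ) * A^k)))
            ≤ d * (((m+1).choose (k+1) : ℝ) * ((m:ℝ)*A + x)^(k+1)) := by
          have h := mul_le_mul_of_nonneg_left key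
            (by positivity : (0:ℝ) ≤ ((m:ℝ)+1) * (m.choose (k+1):ℝ))
          calc d * (((m:ℝ)+1)^(k+1) * ((m.choose (k+1):ℝ) * A^(k+1) + x * ((m.choose k:ℝ) * A^k)))
              = (((m:ℝ)+1) * (m.choose (k+1):ℝ)) * (((m:ℝ)+1)^k * (d * A^(k+1) + ((k:ℝ)+1) * x * A^k)) := by
                linear_combination (((m:ℝ)+1)^(k+1) * x * A^k) * c2
            _ ≤ (((m:ℝ)+1) * (m.choose (k+1):ℝ)) * ((m:ℝ)*A + x)^(k+1) := h
            _ = d * (((m+1).choose (k+1) : ℝ) * ((m:ℝ)*A + x)^(k+1)) := by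
                linear_combination ((m:ℝ)*A + x)^(k+1) * c1.symm
        have P : ((m:ℝ)+1)^(k+1) * ((m.choose (k+1):ℝ) * A^(k+1) + x * ((m.choose k:ℝ) * A^k))
            ≤ ((m+1).choose (k+1) : ℝ) * ((m:ℝ)*A + x)^(k+1) := le_of_mul_le_mul_left step hdpos
        have hmono : E1 + x * E2 ≤ (m.choose (k+1):ℝ) * A^(k+1) + x * ((m.choose k:ℝ) * A^k) :=
          add_le_add hE1A (mul_le_mul_of_nonneg_left hE2A hx)
        calc ((m+1:ℕ):ℝ)^(k+1) * (E1 + x * E2)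
            ≤ ((m+1:ℕ):ℝ)^(k+1) * ((m.choose (k+1):ℝ) * A^(k+1) + x * ((m.choose k:ℝ) * A^k)) := by
              have hnn : (0:ℝ) ≤ ((m+1:ℕ):ℝ)^(k+1) := by positivity
              exact mul_le_mul_of_nonneg_left hmono hnn
          _ ≤ ((m+1).choose (k+1) : ℝ) * ((m:ℝ)*A + x)^(k+1) := by
              push_cast
              exact P
          _ = ((m+1).choose (k+1) : ℝ) * (x + S')^(k+1) := by rw [hSA]; ring_nf

lemma nonneg_of_hasDerivAt {f f' : ℝ → ℝ}
    (hd : ∀ x, HasDerivAt f (f' x) x) (h0 : f 0 = 0)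
    (h' : ∀ x, 0 ≤ x → 0 ≤ f' x) {x : ℝ} (hx : 0 ≤ x) : 0 ≤ f x := by
  have hmono : MonotoneOn f (Set.Ici 0) := by
    apply monotoneOn_of_deriv_nonneg (convex_Ici 0)
    · exact Continuous.continuousOn (by
        rw [continuous_iff_continuousAt]; exact fun y => (hd y).continuousAt)
    · intro y hy
      exact ((hd y).differentiableAt).differentiableWithinAt
    · intro y hy
      rw [interior_Ici] at hy
      rw [(hd y).deriv]
      exact h' y (le_of_lt hy)
  have := hmono (Set.self_mem_Ici) (Set.mem_Ici.mpr hx) hx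
  rwa [h0] at this

lemma xsinh_nonneg {x : ℝ} (hx : 0 ≤ x) : 0 ≤ x * Real.sinh x - 2 * Real.cosh x + 2 := by
  have hd1 : ∀ y : ℝ, HasDerivAt (fun z => z * Real.cosh z - Real.sinh z) (y * Real.sinh y) y := by
    intro y
    have h1 : HasDerivAt (fun z : ℝ => z * Real.cosh z) (1 * Real.cosh y + y * Real.sinh y) y :=
      (hasDerivAt_id y).mul (Real.hasDerivAt_cosh y)
    have h2 := h1.sub (Real.hasDerivAt_sinh y)
    exact h2.congr_deriv (by ring)
  have hd2 : ∀ y : ℝ, HasDerivAt (fun z => z * Real.sinh z - 2 * Real.cosh z + 2)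
      (y * Real.cosh y - Real.sinh y) y := by
    intro y
    have h1 : HasDerivAt (fun z : ℝ => z * Real.sinh z) (1 * Real.sinh y + y * Real.cosh y) y :=
      (hasDerivAt_id y).mul (Real.hasDerivAt_sinh y)
    have h2 : HasDerivAt (fun z : ℝ => 2 * Real.cosh z) (2 * Real.sinh y) y :=
      (Real.hasDerivAt_cosh y).const_mul 2
    have h3 := (h1.sub h2).add_const 2
    exact h3.congr_deriv (by ring)
  have hf' : ∀ y : ℝ, 0 ≤ y → 0 ≤ y * Real.cosh y - Real.sinh y := by
    intro y hy
    refine nonneg_of_hasDerivAt hd1 (by simp) (fun z hz => ?_) hy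
    exact mul_nonneg hz (Real.sinh_nonneg_iff.mpr hz)
  refine nonneg_of_hasDerivAt hd2 (by simp) hf' hx

/-- monotonicity of `(cosh y - 1)/y²`, in multiplied-out form. -/
lemma cosh_ratio_mono {x B : ℝ} (hx : 0 ≤ x) (hxB : x ≤ B) :
    B ^ 2 * (Real.cosh x - 1) ≤ x ^ 2 * (Real.cosh B - 1) := by
  rcases hx.eq_or_lt with h0 | hxpos
  · rw [← h0]
    simp [Real.cosh_zero]
  · have hBpos : 0 < B := lt_of_lt_of_le hxpos hxB
    have hq : MonotoneOn (fun y => (Real.cosh y - 1) / y ^ 2) (Set.Ioi (0:ℝ)) := by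
      have hder : ∀ y : ℝ, y ∈ Set.Ioi (0:ℝ) → HasDerivAt (fun z => (Real.cosh z - 1) / z ^ 2)
          ((Real.sinh y * y ^ 2 - (Real.cosh y - 1) * (2 * y)) / (y ^ 2) ^ 2) y := by
        intro y hy
        have hy' : (0:ℝ) < y := hy
        have hy0 : (y:ℝ) ^ 2 ≠ 0 := by positivity
        have h1 : HasDerivAt (fun z : ℝ => Real.cosh z - 1) (Real.sinh y) y :=
          (Real.hasDerivAt_cosh y).sub_const 1
        have h2 : HasDerivAt (fun z : ℝ => z ^ 2) (2 * y) y := by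
          simpa using (hasDerivAt_pow 2 y)
        exact h1.div h2 hy0
      apply monotoneOn_of_deriv_nonneg (convex_Ioi 0)
      · intro y hy
        exact ((hder y hy).continuousAt).continuousWithinAt
      · intro y hy
        rw [interior_Ioi] at hy
        exact ((hder y hy).differentiableAt).differentiableWithinAt
      · intro y hy
        rw [interior_Ioi] at hy
        rw [(hder y hy).deriv]
        have hy' : 0 < y := hy
        have hnum : 0 ≤ Real.sinh y * y ^ 2 - (Real.cosh y - 1) * (2 * y) := by
          have := xsinh_nonneg hy'.le
          nlinarith
        positivity
    have := hq (Set.mem_Ioi.mpr hxpos) (Set.mem_Ioi.mpr hBpos) hxB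
    rw [div_le_div_iff₀ (by positivity) (by positivity)] at this
    nlinarith

lemma exp_quad {x : ℝ} (hx : 0 ≤ x) :
    (1 - x / 3) * (Real.exp x - x - 1) ≤ x ^ 2 / 2 := by
  have hg2 : ∀ y : ℝ, 0 ≤ y → 0 ≤ (1 + (y - 1) * Real.exp y) / 3 := by
    intro y hy
    have hd : ∀ z : ℝ, HasDerivAt (fun w => (1 + (w - 1) * Real.exp w) / 3)
        (z * Real.exp z / 3) z := by
      intro z
      have h1 : HasDerivAt (fun w : ℝ => (w - 1) * Real.exp w)
          (1 * Real.exp z + (z - 1) * Real.exp z) z :=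
        ((hasDerivAt_id z).sub_const 1).mul (Real.hasDerivAt_exp z)
      have h2 := (h1.const_add 1).div_const 3
      exact h2.congr_deriv (by ring)
    refine nonneg_of_hasDerivAt hd (by simp) (fun z hz => by positivity) hy
  have hg1 : ∀ y : ℝ, 0 ≤ y →
      0 ≤ y + (Real.exp y - y - 1) / 3 - (1 - y / 3) * (Real.exp y - 1) := by
    intro y hy
    have hd : ∀ z : ℝ, HasDerivAt
        (fun w => w + (Real.exp w - w - 1) / 3 - (1 - w / 3) * (Real.exp w - 1))
        ((1 + (z - 1) * Real.exp z) / 3) z := by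
      intro z
      have h1 : HasDerivAt (fun w : ℝ => Real.exp w - w - 1) (Real.exp z - 1) z := by
        have := (Real.hasDerivAt_exp z).sub (hasDerivAt_id z)
        simpa using this.sub_const 1
      have h2 : HasDerivAt (fun w : ℝ => 1 - w / 3) (-(1/3)) z := by
        have := ((hasDerivAt_id z).div_const 3).const_sub 1
        simpa using this
      have h3 : HasDerivAt (fun w : ℝ => (1 - w / 3) * (Real.exp w - 1))
          (-(1/3) * (Real.exp z - 1) + (1 - z / 3) * Real.exp z) z := by
        have h4 : HasDerivAt (fun w : ℝ => Real.exp w - 1) (Real.exp z) z :=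
          (Real.hasDerivAt_exp z).sub_const 1
        exact h2.mul h4
      have h5 := ((hasDerivAt_id z).add (h1.div_const 3)).sub h3
      exact h5.congr_deriv (by ring)
    refine nonneg_of_hasDerivAt hd (by simp) (fun z hz => hg2 z hz) hy
  have hg0 : 0 ≤ x ^ 2 / 2 - (1 - x / 3) * (Real.exp x - x - 1) := by
    have hd : ∀ z : ℝ, HasDerivAt
        (fun w => w ^ 2 / 2 - (1 - w / 3) * (Real.exp w - w - 1))
        (z + (Real.exp z - z - 1) / 3 - (1 - z / 3) * (Real.exp z - 1)) z := by
      intro z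
      have h1 : HasDerivAt (fun w : ℝ => w ^ 2 / 2) z z := by
        have := (hasDerivAt_pow 2 z).div_const 2
        simpa using this
      have h2 : HasDerivAt (fun w : ℝ => Real.exp w - w - 1) (Real.exp z - 1) z := by
        have := (Real.hasDerivAt_exp z).sub (hasDerivAt_id z)
        simpa using this.sub_const 1
      have h3 : HasDerivAt (fun w : ℝ => 1 - w / 3) (-(1/3)) z := by
        have := ((hasDerivAt_id z).div_const 3).const_sub 1
        simpa using this
      have h4 := h1.sub (h3.mul h2)
      exact h4.congr_deriv (by ring)
    exact nonneg_of_hasDerivAt hd (by simp) (fun z hz => hg1 z hz) hx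
  linarith

lemma e0_lemma (u s M : ℝ) (hu : u ≠ 0) (hrel : M * s = 3 * (u - 1)) :
    1 - (s / u * M) / 3 = 1 / u := by
  field_simp
  linear_combination -hrel

lemma e1_lemma (u s : ℝ) (hu : u ≠ 0) :
    -(s / u * s) + (s / u) ^ 2 / (2 * (1 / u)) = -(s ^ 2) / (2 * u) := by
  field_simp
  ring


/-- **Tail bound for one coordinate of `P·v`.**
Let `v` be a unit vector of `ℝⁿ` with `‖v‖_∞ ≤ α`, let `ε₁,…,εₙ` be independent random
signs and `ξ₁,…,ξₙ` (independent of the signs) be `0–1` random variables whose support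
`{j : ξⱼ = 1}` is uniform over the `k`-element subsets of `{1,…,n}`. Then
`W = √(n/k)·∑ vⱼ ξⱼ εⱼ` satisfies, for every `s > 0`,
`Pr(|W| ≥ s) ≤ 2·exp(−s²/(2 + (2/3)·√(n/k)·α·s))`. -/
theorem tail_of_coordinate
    {Ω : Type*} [MeasurableSpace Ω] (μ : Measure Ω) [IsProbabilityMeasure μ]
    (n k : ℕ) (hk : 1 ≤ k) (hkn : k ≤ n) (α : ℝ) (hα : 0 < α)
    (v : Fin n → ℝ) (hv : ∑ j, v j ^ 2 = 1) (hvα : ∀ j, |v j| ≤ α)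
    (e : Fin n → Ω → ℝ)
    (hemeas : ∀ j, Measurable (e j))
    (heval : ∀ j ω, e j ω = 1 ∨ e j ω = -1)
    (hedist : ∀ j, μ {ω | e j ω = 1} = 1 / 2)
    (heindep : iIndepFun e μ)
    (ξ : Fin n → Ω → ℝ)
    (hξmeas : ∀ j, Measurable (ξ j))
    (hξval : ∀ j ω, ξ j ω = 0 ∨ ξ j ω = 1)
    (hξdist : ∀ J : Finset (Fin n), J.card = k →
      μ {ω | ∀ j, ξ j ω = if j ∈ J then 1 else 0} = ((n.choose k : ℝ≥0∞))⁻¹)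
    (hξe : IndepFun (fun ω => fun j => ξ j ω) (fun ω => fun j => e j ω) μ)
    (s : ℝ) (hs : 0 < s) :
    μ {ω | s ≤ |Real.sqrt ((n : ℝ) / k) * ∑ j, v j * ξ j ω * e j ω|} ≤
      ENNReal.ofReal
        (2 * Real.exp (-(s ^ 2) / (2 + 2 / 3 * Real.sqrt ((n : ℝ) / k) * α * s))) := by
  classical
  have hn : 1 ≤ n := le_trans hk hkn
  have hkR : (0:ℝ) < k := by exact_mod_cast hk
  have hnR : (0:ℝ) < n := by exact_mod_cast hn
  set c : ℝ := Real.sqrt ((n : ℝ) / k) with hc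
  have hcpos : 0 < c := Real.sqrt_pos.mpr (by positivity)
  have hc2 : c ^ 2 = (n : ℝ) / k := Real.sq_sqrt (by positivity)
  set a : Fin n → ℝ := fun j => c * v j with ha
  set M : ℝ := c * α with hMdef
  have hM : 0 < M := mul_pos hcpos hα
  have haM : ∀ j, |a j| ≤ M := fun j => by
    rw [ha, abs_mul, abs_of_pos hcpos]
    exact mul_le_mul_of_nonneg_left (hvα j) hcpos.le
  have hsuma : ∑ j, (a j) ^ 2 = (n : ℝ) / k := by
    have h1 : ∀ j : Fin n, a j ^ 2 = c ^ 2 * v j ^ 2 := fun j => by rw [ha]; ring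
    rw [Finset.sum_congr rfl fun j _ => h1 j, ← Finset.mul_sum, hv, mul_one, hc2]
  set X : Ω → ℝ := fun ω => ∑ j, a j * (ξ j ω * e j ω) with hX
  have hXeq : ∀ ω, c * ∑ j, v j * ξ j ω * e j ω = X ω := by
    intro ω
    rw [hX, Finset.mul_sum]
    exact Finset.sum_congr rfl fun j _ => by rw [ha]; ring
  -- measurability / integrability
  have hXmeas : Measurable X := by
    apply Finset.measurable_sum
    intro j _
    exact ((hξmeas j).mul (hemeas j)).const_mul (a j)
  have habs_term : ∀ j ω, |a j * (ξ j ω * e j ω)| ≤ M := by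
    intro j ω
    have h1 : |ξ j ω| ≤ 1 := by rcases hξval j ω with h|h <;> simp [h]
    have h2 : |e j ω| = 1 := by rcases heval j ω with h|h <;> simp [h]
    rw [abs_mul (a j) _, abs_mul (ξ j ω) _, h2]
    nlinarith [haM j, abs_nonneg (a j), abs_nonneg (ξ j ω)]
  have hXbd : ∀ ω, |X ω| ≤ n * M := by
    intro ω
    calc |X ω| ≤ ∑ j, |a j * (ξ j ω * e j ω)| := Finset.abs_sum_le_sum_abs _ _
      _ ≤ ∑ _j : Fin n, M := Finset.sum_le_sum fun j _ => habs_term j ω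
      _ = n * M := by rw [Finset.sum_const, Finset.card_univ, Fintype.card_fin, nsmul_eq_mul]
  have hintX : ∀ t : ℝ, Integrable (fun ω => Real.exp (t * X ω)) μ := by
    intro t
    apply Integrable.mono' (integrable_const (Real.exp (|t| * (n * M))))
      ((hXmeas.const_mul t).exp.aestronglyMeasurable)
    filter_upwards with ω
    rw [Real.norm_eq_abs, Real.abs_exp, Real.exp_le_exp]
    calc t * X ω ≤ |t * X ω| := le_abs_self _
      _ = |t| * |X ω| := abs_mul _ _
      _ ≤ |t| * (n * M) := mul_le_mul_of_nonneg_left (hXbd ω) (abs_nonneg t)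
  -- the partition by support sets
  set 𝒦 := Finset.powersetCard k (Finset.univ : Finset (Fin n)) with hKdef
  set A : Finset (Fin n) → Set Ω := fun J => {ω | ∀ j, ξ j ω = if j ∈ J then 1 else 0} with hA
  have hAmeas : ∀ J, MeasurableSet (A J) := by
    intro J
    have h1 : A J = ⋂ j, (ξ j) ⁻¹' {if j ∈ J then (1:ℝ) else 0} := by
      ext ω; simp [hA, Set.mem_iInter]
    rw [h1]
    exact MeasurableSet.iInter fun j => (hξmeas j) (measurableSet_singleton _)
  have hcardK : ∀ J ∈ 𝒦, J.card = k := fun J hJ => (Finset.mem_powersetCard.mp hJ).2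
  have hmass : ∀ J ∈ 𝒦, μ (A J) = ((n.choose k : ℝ≥0∞))⁻¹ := fun J hJ => hξdist J (hcardK J hJ)
  have hdisj : (↑𝒦 : Set (Finset (Fin n))).PairwiseDisjoint A := by
    intro J hJ J' hJ' hne
    rw [Function.onFun, Set.disjoint_left]
    intro ω hω hω'
    have hnot : ¬ J ⊆ J' := by
      intro hsub
      exact hne (Finset.eq_of_subset_of_card_le hsub
        (le_of_eq ((hcardK J' hJ').trans (hcardK J hJ).symm)))
    obtain ⟨j, hjJ, hjJ'⟩ := Finset.not_subset.mp hnot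
    have h1 : ξ j ω = 1 := by have := hω j; simpa [hjJ] using this
    have h0 : ξ j ω = 0 := by have := hω' j; simpa [hjJ'] using this
    rw [h1] at h0
    norm_num at h0
  have hchoose_pos : 0 < n.choose k := Nat.choose_pos hkn
  have hKcard : 𝒦.card = n.choose k := by
    rw [hKdef, Finset.card_powersetCard, Finset.card_univ, Fintype.card_fin]
  set U := ⋃ J ∈ 𝒦, A J with hU
  have hUmeas : MeasurableSet U := 𝒦.measurableSet_biUnion fun J _ => hAmeas J
  have hU1 : μ U = 1 := by
    rw [hU, measure_biUnion_finset hdisj (fun J _ => hAmeas J),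
      Finset.sum_congr rfl hmass, Finset.sum_const, hKcard, nsmul_eq_mul]
    exact ENNReal.mul_inv_cancel
      (by exact_mod_cast hchoose_pos.ne' : (n.choose k : ℝ≥0∞) ≠ 0)
      (ENNReal.natCast_ne_top _)
  have hUc : μ Uᶜ = 0 := by
    rw [measure_compl hUmeas (measure_ne_top μ U), hU1, measure_univ, tsub_self]
  -- integrability of the partial exponential sums
  have hYmeas : ∀ (t : ℝ) (J : Finset (Fin n)),
      Measurable (fun ω => Real.exp (t * ∑ j ∈ J, a j * e j ω)) := by
    intro t J
    apply Measurable.exp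
    apply Measurable.const_mul
    exact Finset.measurable_sum J fun j _ => (hemeas j).const_mul (a j)
  have hYint : ∀ (t : ℝ) (J : Finset (Fin n)),
      Integrable (fun ω => Real.exp (t * ∑ j ∈ J, a j * e j ω)) μ := by
    intro t J
    apply Integrable.mono' (integrable_const (Real.exp (|t| * (n * M))))
      ((hYmeas t J).aestronglyMeasurable)
    filter_upwards with ω
    rw [Real.norm_eq_abs, Real.abs_exp, Real.exp_le_exp]
    have hbd : |∑ j ∈ J, a j * e j ω| ≤ n * M := by
      calc |∑ j ∈ J, a j * e j ω| ≤ ∑ j ∈ J, |a j * e j ω| := Finset.abs_sum_le_sum_abs _ _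
        _ ≤ ∑ _j ∈ J, M := by
            refine Finset.sum_le_sum fun j _ => ?_
            have h2 : |e j ω| = 1 := by rcases heval j ω with h|h <;> simp [h]
            rw [abs_mul (a j) _, h2, mul_one]
            exact haM j
        _ = J.card * M := by rw [Finset.sum_const, nsmul_eq_mul]
        _ ≤ n * M := by
            apply mul_le_mul_of_nonneg_right _ hM.le
            exact_mod_cast le_trans (Finset.card_le_card (Finset.subset_univ J))
              (le_of_eq (by rw [Finset.card_univ, Fintype.card_fin]))
    calc t * (∑ j ∈ J, a j * e j ω) ≤ |t * ∑ j ∈ J, a j * e j ω| := le_abs_self _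
      _ = |t| * |∑ j ∈ J, a j * e j ω| := abs_mul _ _
      _ ≤ |t| * (n * M) := mul_le_mul_of_nonneg_left hbd (abs_nonneg t)
  -- mgf of a single signed coordinate
  have hone : ∀ (t : ℝ) (j : Fin n),
      ∫ ω, Real.exp (t * (a j * e j ω)) ∂μ = Real.cosh (t * a j) := by
    intro t j
    have hmeas1 : MeasurableSet {ω | e j ω = 1} := (hemeas j) (measurableSet_singleton 1)
    have hmeasm1 : MeasurableSet {ω | e j ω = -1} := (hemeas j) (measurableSet_singleton (-1))
    have hsetc : {ω | e j ω = -1} = {ω | e j ω = 1}ᶜ := by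
      ext ω
      rcases heval j ω with h|h <;> simp [h] <;> norm_num
    have hm1 : μ {ω | e j ω = 1} = 1/2 := hedist j
    have hm2 : μ {ω | e j ω = -1} = 1/2 := by
      rw [hsetc, measure_compl hmeas1 (measure_ne_top μ _), hm1, measure_univ]
      rw [one_div, ENNReal.one_sub_inv_two]
    have hpt : (fun ω => Real.exp (t * (a j * e j ω))) = fun ω =>
        ({ω | e j ω = 1}).indicator (fun _ => Real.exp (t * a j)) ω
        + ({ω | e j ω = -1}).indicator (fun _ => Real.exp (-(t * a j))) ω := by
      funext ω
      rcases heval j ω with h|h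
      · have hin : ω ∈ {ω | e j ω = 1} := h
        have hout : ω ∉ {ω | e j ω = -1} := by simp only [Set.mem_setOf_eq, h]; norm_num
        rw [Set.indicator_of_mem hin, Set.indicator_of_notMem hout, add_zero, h, mul_one]
      · have hout : ω ∉ {ω | e j ω = 1} := by simp only [Set.mem_setOf_eq, h]; norm_num
        have hin : ω ∈ {ω | e j ω = -1} := h
        rw [Set.indicator_of_mem hin, Set.indicator_of_notMem hout, zero_add, h]
        ring_nf
    rw [hpt, integral_add ((integrable_const _).indicator hmeas1)
        ((integrable_const _).indicator hmeasm1),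
      integral_indicator_const _ hmeas1, integral_indicator_const _ hmeasm1,
      measureReal_def, measureReal_def, hm1, hm2, Real.cosh_eq]
    rw [show ((1:ℝ≥0∞)/2).toReal = 1/2 by simp]
    rw [smul_eq_mul, smul_eq_mul]
    ring
  -- product formula over a subset J
  have hprod : ∀ (t : ℝ) (J : Finset (Fin n)),
      ∫ ω, Real.exp (t * ∑ j ∈ J, a j * e j ω) ∂μ = ∏ j ∈ J, Real.cosh (t * a j) := by
    intro t J
    set Z : Fin n → Ω → ℝ := fun j ω => a j * e j ω with hZ
    have hZmeas : ∀ j, Measurable (Z j) := fun j => (hemeas j).const_mul (a j)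
    have hZindep : iIndepFun Z μ := by
      have := heindep.comp (fun j (x : ℝ) => a j * x) (fun j => measurable_const_mul (a j))
      exact this
    have hsum := hZindep.mgf_sum hZmeas J (t := t)
    have h1 : mgf (∑ j ∈ J, Z j) μ t = ∫ ω, Real.exp (t * ∑ j ∈ J, a j * e j ω) ∂μ := by
      rw [mgf]
      congr 1
      funext ω
      simp only [Finset.sum_apply]
      rfl
    have h2 : ∀ j ∈ J, mgf (Z j) μ t = Real.cosh (t * a j) := by
      intro j _
      rw [mgf]
      exact hone t j
    rw [← h1, hsum]
    exact Finset.prod_congr rfl h2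
  -- splitting the integral over the partition
  have hsplit : ∀ t : ℝ, ∫ ω, Real.exp (t * X ω) ∂μ
      = ∑ J ∈ 𝒦, ∫ ω in A J, Real.exp (t * X ω) ∂μ := by
    intro t
    have h1 := MeasureTheory.integral_add_compl hUmeas (hintX t)
    have h2 : ∫ ω in Uᶜ, Real.exp (t * X ω) ∂μ = 0 := by
      have hz : μ.restrict Uᶜ = 0 := Measure.restrict_eq_zero.mpr hUc
      rw [hz, integral_zero_measure]
    have h3 : ∫ ω in U, Real.exp (t * X ω) ∂μ
        = ∑ J ∈ 𝒦, ∫ ω in A J, Real.exp (t * X ω) ∂μ := by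
      rw [hU]
      exact integral_biUnion_finset 𝒦 (fun J _ => hAmeas J) hdisj
        (fun J _ => (hintX t).integrableOn)
    rw [← h3]
    linarith [h1, h2]
  -- on each cell, replace the integrand and use independence
  have hcell : ∀ (t : ℝ), ∀ J ∈ 𝒦, ∫ ω in A J, Real.exp (t * X ω) ∂μ
      = ((n.choose k : ℝ))⁻¹ * ∏ j ∈ J, Real.cosh (t * a j) := by
    intro t J hJ
    have hcong : ∫ ω in A J, Real.exp (t * X ω) ∂μ
        = ∫ ω in A J, Real.exp (t * ∑ j ∈ J, a j * e j ω) ∂μ := by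
      apply setIntegral_congr_fun (hAmeas J)
      intro ω hω
      have hωA : ∀ j, ξ j ω = if j ∈ J then 1 else 0 := hω
      have hXJ : X ω = ∑ j ∈ J, a j * e j ω := by
        show (∑ j, a j * (ξ j ω * e j ω)) = _
        have hzero : ∀ j ∈ Finset.univ, j ∉ J → a j * (ξ j ω * e j ω) = 0 := by
          intro j _ hj
          rw [hωA j, if_neg hj, zero_mul, mul_zero]
        rw [← Finset.sum_subset (Finset.subset_univ J) hzero]
        refine Finset.sum_congr rfl fun j hj => ?_
        rw [hωA j, if_pos hj, one_mul]
      simp only [hXJ]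
    rw [hcong]
    -- independence step
    set B : Set (Fin n → ℝ) := {f | ∀ j, f j = if j ∈ J then (1:ℝ) else 0} with hBdef
    have hBmeas : MeasurableSet B := by
      have h1 : B = ⋂ j, (fun f : Fin n → ℝ => f j) ⁻¹' {if j ∈ J then (1:ℝ) else 0} := by
        ext f; simp [hBdef, Set.mem_iInter]
      rw [h1]
      exact MeasurableSet.iInter fun j => (measurable_pi_apply j) (measurableSet_singleton _)
    set φ : (Fin n → ℝ) → ℝ := B.indicator (fun _ => (1:ℝ)) with hφdef
    set ψ : (Fin n → ℝ) → ℝ := fun f => Real.exp (t * ∑ j ∈ J, a j * f j) with hψdef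
    have hφm : Measurable φ := measurable_const.indicator hBmeas
    have hψm : Measurable ψ := by
      apply Measurable.exp
      apply Measurable.const_mul
      exact Finset.measurable_sum J fun j _ => (measurable_pi_apply (X := fun _ => ℝ) j).const_mul (a j)
    have hindep2 : IndepFun (φ ∘ (fun ω => fun j => ξ j ω)) (ψ ∘ (fun ω => fun j => e j ω)) μ :=
      hξe.comp hφm hψm
    have hφcomp : (φ ∘ (fun ω => fun j => ξ j ω)) = (A J).indicator (fun _ => (1:ℝ)) := by
      funext ω
      by_cases hω : ω ∈ A J
      · have hB : (fun j => ξ j ω) ∈ B := hω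
        simp only [Function.comp_apply, hφdef]
        rw [Set.indicator_of_mem hB, Set.indicator_of_mem hω]
      · have hB : (fun j => ξ j ω) ∉ B := hω
        simp only [Function.comp_apply, hφdef]
        rw [Set.indicator_of_notMem hB, Set.indicator_of_notMem hω]
    have hψcomp : (ψ ∘ (fun ω => fun j => e j ω))
        = fun ω => Real.exp (t * ∑ j ∈ J, a j * e j ω) := rfl
    have hφint : Integrable (φ ∘ (fun ω => fun j => ξ j ω)) μ := by
      rw [hφcomp]
      exact (integrable_const (1:ℝ)).indicator (hAmeas J)
    have hψint : Integrable (ψ ∘ (fun ω => fun j => e j ω)) μ := by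
      rw [hψcomp]; exact hYint t J
    have hmul := hindep2.integral_mul_eq_mul_integral hφint.aestronglyMeasurable hψint.aestronglyMeasurable
    rw [hφcomp, hψcomp] at hmul
    have hLHS : ∫ ω, ((A J).indicator (fun _ => (1:ℝ)) * fun ω => Real.exp (t * ∑ j ∈ J, a j * e j ω)) ω ∂μ
        = ∫ ω in A J, Real.exp (t * ∑ j ∈ J, a j * e j ω) ∂μ := by
      rw [← integral_indicator (hAmeas J)]
      congr 1
      funext ω
      by_cases hω : ω ∈ A J
      · simp [Set.indicator_of_mem hω]
      · simp [Set.indicator_of_notMem hω]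
    rw [hLHS] at hmul
    rw [hmul, integral_indicator_const _ (hAmeas J), hprod t J, measureReal_def, hmass J hJ]
    rw [smul_eq_mul, mul_one]
    congr 1
    rw [ENNReal.toReal_inv, ENNReal.toReal_natCast]
  -- the moment generating function identity
  have hmgf : ∀ t : ℝ, mgf X μ t
      = ((n.choose k : ℝ))⁻¹ * ∑ J ∈ 𝒦, ∏ j ∈ J, Real.cosh (t * a j) := by
    intro t
    rw [mgf, hsplit t, Finset.sum_congr rfl (hcell t), ← Finset.mul_sum]
  -- choice of the Chernoff parameter
  set lam : ℝ := s / (1 + M * s / 3) with hlamdef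
  have hden : (0:ℝ) < 1 + M * s / 3 := by positivity
  have hlam : 0 < lam := div_pos hs hden
  set Bc : ℝ := lam * M with hBcdef
  have hBc : 0 < Bc := mul_pos hlam hM
  have hBc3 : Bc < 3 := by
    rw [hBcdef, hlamdef, div_mul_eq_mul_div, div_lt_iff₀ hden]
    nlinarith
  set G : ℝ := (Real.cosh Bc - 1) / M ^ 2 with hGdef
  have hG0 : 0 ≤ G := by
    apply div_nonneg _ (by positivity)
    linarith [Real.one_le_cosh Bc]
  -- pointwise cosh bound
  have hkey : ∀ j, Real.cosh (lam * a j) ≤ 1 + (a j) ^ 2 * G := by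
    intro j
    have hx : |lam * a j| ≤ Bc := by
      rw [abs_mul, abs_of_pos hlam, hBcdef]
      exact mul_le_mul_of_nonneg_left (haM j) hlam.le
    have hmono := cosh_ratio_mono (abs_nonneg (lam * a j)) hx
    rw [Real.cosh_abs, sq_abs] at hmono
    -- hmono : Bc^2 * (cosh (lam * a j) - 1) ≤ (lam * a j)^2 * (cosh Bc - 1)
    have hl2 : (0:ℝ) < lam ^ 2 := by positivity
    have hM2 : (0:ℝ) < M ^ 2 := by positivity
    have h2 : M ^ 2 * (Real.cosh (lam * a j) - 1) ≤ (a j) ^ 2 * (Real.cosh Bc - 1) := by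
      have h3 : lam ^ 2 * (M ^ 2 * (Real.cosh (lam * a j) - 1))
          ≤ lam ^ 2 * ((a j) ^ 2 * (Real.cosh Bc - 1)) := by
        calc lam ^ 2 * (M ^ 2 * (Real.cosh (lam * a j) - 1))
            = Bc ^ 2 * (Real.cosh (lam * a j) - 1) := by rw [hBcdef]; ring
          _ ≤ (lam * a j) ^ 2 * (Real.cosh Bc - 1) := hmono
          _ = lam ^ 2 * ((a j) ^ 2 * (Real.cosh Bc - 1)) := by ring
      exact le_of_mul_le_mul_left h3 hl2
    have h4 : Real.cosh (lam * a j) - 1 ≤ (a j) ^ 2 * ((Real.cosh Bc - 1) / M ^ 2) := by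
      rw [← mul_div_assoc, le_div_iff₀ hM2]
      linarith [h2]
    rw [hGdef]
    linarith [h4]
  -- bound on the sum of coshes
  have hcosh_nonneg : ∀ j : Fin n, 0 ≤ Real.cosh (lam * a j) :=
    fun j => le_trans zero_le_one (Real.one_le_cosh _)
  have hsum_cosh : ∑ j, Real.cosh (lam * a j) ≤ (n:ℝ) * (1 + G / k) := by
    calc ∑ j, Real.cosh (lam * a j) ≤ ∑ j, (1 + (a j) ^ 2 * G) :=
          Finset.sum_le_sum fun j _ => hkey j
      _ = (n:ℝ) + ((n:ℝ)/k) * G := by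
          rw [Finset.sum_add_distrib]
          congr 1
          · rw [Finset.sum_const, Finset.card_univ, Fintype.card_fin, nsmul_eq_mul, mul_one]
          · rw [← Finset.sum_mul, hsuma]
      _ = (n:ℝ) * (1 + G / k) := by field_simp
  -- moment generating function bound
  have hmgf_le : ∀ t : ℝ, (∀ j : Fin n, Real.cosh (t * a j) = Real.cosh (lam * a j)) →
      mgf X μ t ≤ Real.exp G := by
    intro t hct
    rw [hmgf t]
    have hmac := maclaurin (Finset.univ : Finset (Fin n)) k
      (fun j => Real.cosh (lam * a j)) (fun j _ => hcosh_nonneg j)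
    rw [Finset.card_univ, Fintype.card_fin] at hmac
    have hnk : (0:ℝ) < (n:ℝ)^k := by positivity
    have hsumJ : ∑ J ∈ 𝒦, ∏ j ∈ J, Real.cosh (t * a j)
        = ∑ J ∈ 𝒦, ∏ j ∈ J, Real.cosh (lam * a j) := by
      exact Finset.sum_congr rfl fun J _ => Finset.prod_congr rfl fun j _ => hct j
    have hpow : (∑ j, Real.cosh (lam * a j)) ^ k ≤ ((n:ℝ) * (1 + G / k)) ^ k := by
      apply pow_le_pow_left₀ (Finset.sum_nonneg fun j _ => hcosh_nonneg j) hsum_cosh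
    have hKbound : ∑ J ∈ 𝒦, ∏ j ∈ J, Real.cosh (lam * a j)
        ≤ (n.choose k : ℝ) * (1 + G / k) ^ k := by
      have h1 : (n:ℝ)^k * ∑ J ∈ 𝒦, ∏ j ∈ J, Real.cosh (lam * a j)
          ≤ (n.choose k : ℝ) * ((n:ℝ) * (1 + G / k)) ^ k := le_trans hmac
          (mul_le_mul_of_nonneg_left hpow (by positivity))
      have h2 : (n.choose k : ℝ) * ((n:ℝ) * (1 + G / k)) ^ k
          = (n:ℝ)^k * ((n.choose k : ℝ) * (1 + G / k) ^ k) := by rw [mul_pow]; ring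
      rw [h2] at h1
      exact le_of_mul_le_mul_left h1 hnk
    have hGk : 0 ≤ 1 + G / k := by positivity
    have hfinal : ((n.choose k : ℝ))⁻¹ * ∑ J ∈ 𝒦, ∏ j ∈ J, Real.cosh (lam * a j)
        ≤ (1 + G / k) ^ k := by
      have hcpos' : (0:ℝ) < (n.choose k : ℝ) := by exact_mod_cast hchoose_pos
      rw [inv_mul_le_iff₀ hcpos']
      calc ∑ J ∈ 𝒦, ∏ j ∈ J, Real.cosh (lam * a j)
          ≤ (n.choose k : ℝ) * (1 + G / k) ^ k := hKbound
        _ = (n.choose k : ℝ) * (1 + G / k) ^ k := rfl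
    rw [hsumJ]
    calc ((n.choose k : ℝ))⁻¹ * ∑ J ∈ 𝒦, ∏ j ∈ J, Real.cosh (lam * a j)
        ≤ (1 + G / k) ^ k := hfinal
      _ ≤ (Real.exp (G / k)) ^ k := by
          apply pow_le_pow_left₀ hGk
          linarith [Real.add_one_le_exp (G / k)]
      _ = Real.exp G := by
          rw [← Real.exp_nat_mul]
          congr 1
          field_simp
  -- the exponent computation
  have h13 : (0:ℝ) < 1 - Bc / 3 := by linarith
  have hquad : G ≤ lam ^ 2 / (2 * (1 - Bc / 3)) := by
    have hsinh : Bc ≤ Real.sinh Bc := Real.self_le_sinh_iff.mpr hBc.le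
    have hcs : Real.cosh Bc + Real.sinh Bc = Real.exp Bc := Real.cosh_add_sinh Bc
    have step1 : Real.cosh Bc - 1 ≤ Real.exp Bc - Bc - 1 := by linarith
    have step2 := exp_quad hBc.le
    have step3 : Real.exp Bc - Bc - 1 ≤ Bc ^ 2 / (2 * (1 - Bc / 3)) := by
      rw [le_div_iff₀ (by linarith : (0:ℝ) < 2 * (1 - Bc / 3))]
      calc (Real.exp Bc - Bc - 1) * (2 * (1 - Bc / 3))
          = 2 * ((1 - Bc / 3) * (Real.exp Bc - Bc - 1)) := by ring
        _ ≤ 2 * (Bc ^ 2 / 2) := by linarith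
        _ = Bc ^ 2 := by ring
    have hM2 : (0:ℝ) < M ^ 2 := by positivity
    rw [hGdef, div_le_iff₀ hM2]
    calc Real.cosh Bc - 1 ≤ Bc ^ 2 / (2 * (1 - Bc / 3)) := le_trans step1 step3
      _ = lam ^ 2 / (2 * (1 - Bc / 3)) * M ^ 2 := by
          rw [hBcdef]; ring
  have hfin : -(lam * s) + G ≤ -(s ^ 2) / (2 + 2 / 3 * M * s) := by
    have hrel : M * s = 3 * ((1 + M * s / 3) - 1) := by ring
    have e0 : 1 - Bc / 3 = 1 / (1 + M * s / 3) := by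
      rw [hBcdef, hlamdef]
      exact e0_lemma (1 + M * s / 3) s M hden.ne' hrel
    have e1 : -(lam * s) + lam ^ 2 / (2 * (1 - Bc / 3)) = -(s ^ 2) / (2 + 2 / 3 * M * s) := by
      rw [e0, hlamdef, show 2 + 2 / 3 * M * s = 2 * (1 + M * s / 3) by ring]
      exact e1_lemma (1 + M * s / 3) s hden.ne'
    linarith [hquad]
  -- Chernoff, both sides
  have hmgf_lam : mgf X μ lam ≤ Real.exp G := hmgf_le lam fun j => rfl
  have hmgf_neg : mgf X μ (-lam) ≤ Real.exp G := by
    apply hmgf_le (-lam)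
    intro j
    rw [show -lam * a j = -(lam * a j) by ring, Real.cosh_neg]
  have hEbound : ∀ t' : ℝ, mgf X μ t' ≤ Real.exp G →
      Real.exp (-(lam * s)) * mgf X μ t' ≤ Real.exp (-(s ^ 2) / (2 + 2 / 3 * M * s)) := by
    intro t' hb
    calc Real.exp (-(lam * s)) * mgf X μ t'
        ≤ Real.exp (-(lam * s)) * Real.exp G :=
          mul_le_mul_of_nonneg_left hb (Real.exp_nonneg _)
      _ = Real.exp (-(lam * s) + G) := (Real.exp_add _ _).symm
      _ ≤ Real.exp (-(s ^ 2) / (2 + 2 / 3 * M * s)) := Real.exp_le_exp.mpr hfin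
  have hup := measure_ge_le_exp_mul_mgf (μ := μ) (X := X) (t := lam) s hlam.le (hintX lam)
  have hlow := measure_le_le_exp_mul_mgf (μ := μ) (X := X) (t := -lam) (-s)
    (by linarith) (hintX (-lam))
  rw [show -lam * s = -(lam * s) by ring] at hup
  rw [show -(-lam) * (-s) = -(lam * s) by ring] at hlow
  have hup2 : (μ {ω | s ≤ X ω}).toReal ≤ Real.exp (-(s ^ 2) / (2 + 2 / 3 * M * s)) :=
    le_trans hup (hEbound lam hmgf_lam)
  have hlow2 : (μ {ω | X ω ≤ -s}).toReal ≤ Real.exp (-(s ^ 2) / (2 + 2 / 3 * M * s)) :=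
    le_trans hlow (hEbound (-lam) hmgf_neg)
  -- assemble
  have hseteq : {ω | s ≤ |c * ∑ j, v j * ξ j ω * e j ω|} = {ω | s ≤ |X ω|} := by
    ext ω
    rw [Set.mem_setOf_eq, Set.mem_setOf_eq, hXeq ω]
  have hsub : {ω | s ≤ |X ω|} ⊆ {ω | s ≤ X ω} ∪ {ω | X ω ≤ -s} := by
    intro ω hω
    have hω' : s ≤ |X ω| := hω
    rcases le_abs.mp hω' with h | h
    · exact Or.inl h
    · exact Or.inr (by simpa using (by linarith : X ω ≤ -s))
  have hexp_nn : (0:ℝ) ≤ Real.exp (-(s ^ 2) / (2 + 2 / 3 * M * s)) := Real.exp_nonneg _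
  have htail : μ {ω | s ≤ |X ω|}
      ≤ ENNReal.ofReal (2 * Real.exp (-(s ^ 2) / (2 + 2 / 3 * M * s))) := by
    calc μ {ω | s ≤ |X ω|} ≤ μ ({ω | s ≤ X ω} ∪ {ω | X ω ≤ -s}) := measure_mono hsub
      _ ≤ μ {ω | s ≤ X ω} + μ {ω | X ω ≤ -s} := measure_union_le _ _
      _ ≤ ENNReal.ofReal (Real.exp (-(s ^ 2) / (2 + 2 / 3 * M * s)))
          + ENNReal.ofReal (Real.exp (-(s ^ 2) / (2 + 2 / 3 * M * s))) := by
          gcongr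
          · rw [← ENNReal.ofReal_toReal (measure_ne_top μ {ω | s ≤ X ω})]
            exact ENNReal.ofReal_le_ofReal hup2
          · rw [← ENNReal.ofReal_toReal (measure_ne_top μ {ω | X ω ≤ -s})]
            exact ENNReal.ofReal_le_ofReal hlow2
      _ = ENNReal.ofReal (2 * Real.exp (-(s ^ 2) / (2 + 2 / 3 * M * s))) := by
          rw [← ENNReal.ofReal_add hexp_nn hexp_nn]
          congr 1
          ring
  have hMrw : -(s ^ 2) / (2 + 2 / 3 * M * s) = -(s ^ 2) / (2 + 2 / 3 * c * α * s) := by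
    rw [hMdef]; ring_nf
  rw [hseteq, ← hMrw]
  exact htail
end

section
/- Let Y₁,…,Y_n be independent real random variables with E Y_i = 0, E Y_i² ≤ σ² and Y_i ≤ 1 almost surely. Then for every t > 0, Pr( Y₁ + ⋯ + Y_n ≥ t ) ≤ exp( − t² / ( 2·(e^{σ^{−2}} − 1)·σ⁴·n ) ). -/
open MeasureTheory ProbabilityTheory
open scoped ENNReal NNReal Nat

lemma real_exp_eq_tsum (x : ℝ) : Real.exp x = ∑' n : ℕ, x ^ n / n ! := by
  rw [Real.exp_eq_exp_ℝ, NormedSpace.exp_eq_tsum_div]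

lemma exp_le_of_nonpos {x : ℝ} (hx : x ≤ 0) : Real.exp x ≤ 1 + x + x ^ 2 / 2 := by
  have hder : ∀ y : ℝ, HasDerivAt (fun y : ℝ => 1 + y + y ^ 2 / 2 - Real.exp y)
      (1 + y - Real.exp y) y := by
    intro y
    have h1 : HasDerivAt (fun y : ℝ => 1 + y) 1 y := (hasDerivAt_id y).const_add 1
    have h2 : HasDerivAt (fun y : ℝ => y ^ 2 / 2) y y := by
      simpa using (hasDerivAt_pow 2 y).div_const 2
    have h3 := Real.hasDerivAt_exp y
    have := (h1.add h2).sub h3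
    exact this
  have hanti : Antitone (fun y : ℝ => 1 + y + y ^ 2 / 2 - Real.exp y) := by
    apply antitone_of_deriv_nonpos
    · exact fun y => (hder y).differentiableAt
    · intro y
      rw [(hder y).deriv]
      linarith [Real.add_one_le_exp y]
  have h := hanti hx
  simp only [Real.exp_zero] at h
  norm_num at h
  linarith

set_option maxHeartbeats 1000000 in
lemma taylor_two_bound {a x : ℝ} (ha : 0 < a) (hx0 : 0 ≤ x) (hxa : x ≤ a) :
    2 * a * (Real.exp x - 1 - x) ≤ (Real.exp a - 1) * x ^ 2 := by
  have hsum_x : Summable (fun n : ℕ => x ^ n / n !) := Real.summable_pow_div_factorial x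
  have hsum_a : Summable (fun n : ℕ => a ^ n / n !) := Real.summable_pow_div_factorial a
  have hx2 : Summable (fun k : ℕ => x ^ (k + 2) / (k + 2)!) :=
    (summable_nat_add_iff 2).mpr hsum_x
  have ha1 : Summable (fun k : ℕ => a ^ (k + 1) / (k + 1)!) :=
    (summable_nat_add_iff 1).mpr hsum_a
  have hex : Real.exp x - 1 - x = ∑' k : ℕ, x ^ (k + 2) / (k + 2)! := by
    rw [real_exp_eq_tsum x, ← Summable.sum_add_tsum_nat_add 2 hsum_x]
    simp [Finset.sum_range_succ]
    ring
  have hea : Real.exp a - 1 = ∑' k : ℕ, a ^ (k + 1) / (k + 1)! := by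
    rw [real_exp_eq_tsum a, ← Summable.sum_add_tsum_nat_add 1 hsum_a]
    simp [Finset.sum_range_succ]
  rw [hex, hea, ← tsum_mul_left, ← tsum_mul_right]
  refine Summable.tsum_le_tsum ?_ (hx2.mul_left _) (ha1.mul_right _)
  intro k
  have hfac : ((k + 2)! : ℝ) = ((k:ℝ) + 2) * (k + 1)! := by
    rw [Nat.factorial_succ]; push_cast; ring
  have hfp1 : (0:ℝ) < (k + 1)! := by positivity
  have hfp2 : (0:ℝ) < (k + 2)! := by positivity
  have lhs_eq : 2 * a * (x ^ (k + 2) / (k + 2)!) = 2 * a * x ^ (k + 2) / ((k + 2)! : ℝ) := by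
    ring
  have rhs_eq : a ^ (k + 1) / ((k + 1)! : ℝ) * x ^ 2 = a ^ (k + 1) * x ^ 2 / ((k + 1)! : ℝ) := by
    ring
  rw [lhs_eq, rhs_eq, div_le_div_iff₀ hfp2 hfp1]
  have hxk : x ^ k ≤ a ^ k := pow_le_pow_left₀ hx0 hxa k
  have hcomb : 2 * a * x ^ (k + 2) ≤ ((k:ℝ) + 2) * (a ^ (k + 1) * x ^ 2) := by
    have hxx : x ^ (k + 2) = x ^ k * x ^ 2 := by ring
    have haa : a ^ (k + 1) = a * a ^ k := by ring
    have hk2 : (2:ℝ) ≤ (k:ℝ) + 2 := by linarith [Nat.cast_nonneg (α := ℝ) k]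
    have h1 : x ^ k * x ^ 2 ≤ a ^ k * x ^ 2 := by nlinarith [sq_nonneg x]
    have hax2 : 0 ≤ a * (a ^ k * x ^ 2) := by positivity
    rw [hxx, haa]
    nlinarith [sq_nonneg x, pow_nonneg ha.le k]
  calc 2 * a * x ^ (k + 2) * ((k + 1)! : ℝ)
      ≤ ((k:ℝ) + 2) * (a ^ (k + 1) * x ^ 2) * ((k + 1)! : ℝ) :=
        mul_le_mul_of_nonneg_right hcomb hfp1.le
    _ = a ^ (k + 1) * x ^ 2 * (((k:ℝ) + 2) * ((k + 1)! : ℝ)) := by ring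
    _ = a ^ (k + 1) * x ^ 2 * ((k + 2)! : ℝ) := by rw [hfac]

lemma key_pointwise {a x : ℝ} (ha : 0 < a) (hxa : x ≤ a) :
    Real.exp x ≤ 1 + x + (Real.exp a - 1) / (2 * a) * x ^ 2 := by
  have hea : a ≤ Real.exp a - 1 := by linarith [Real.add_one_le_exp a]
  rcases le_or_gt x 0 with hx | hx
  · have h1 := exp_le_of_nonpos hx
    have hK : 1 / 2 ≤ (Real.exp a - 1) / (2 * a) := by
      rw [div_le_div_iff₀ (by norm_num) (by positivity)]
      nlinarith
    nlinarith [sq_nonneg x]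
  · have h := taylor_two_bound ha hx.le hxa
    have h2a : (0:ℝ) < 2 * a := by positivity
    rw [div_mul_eq_mul_div]
    have h3 : Real.exp x - 1 - x ≤ (Real.exp a - 1) * x ^ 2 / (2 * a) := by
      rw [le_div_iff₀ h2a]; nlinarith
    linarith

set_option maxHeartbeats 1000000

/-- **A one-sided tail bound for sums of bounded-above independent variables.**
Let `Y₁,…,Yₙ` be independent random variables with `E Yᵢ = 0`, `E Yᵢ² ≤ σ²` and
`Yᵢ ≤ 1` a.s. Then for every `t > 0`,
`Pr(Y₁ + ⋯ + Yₙ ≥ t) ≤ exp(−t²/(2(e^{σ⁻²} − 1)σ⁴n))`. -/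
theorem lower_tail_lemma
    {Ω : Type*} [MeasurableSpace Ω] (μ : Measure Ω) [IsProbabilityMeasure μ]
    (n : ℕ) (Y : Fin n → Ω → ℝ)
    (hYmeas : ∀ i, Measurable (Y i))
    (hYindep : iIndepFun Y μ)
    (hYint : ∀ i, Integrable (Y i) μ)
    (hYsqint : ∀ i, Integrable (fun ω => Y i ω ^ 2) μ)
    (hYmean : ∀ i, ∫ ω, Y i ω ∂μ = 0)
    (σ : ℝ) (hσ : 0 < σ)
    (hYvar : ∀ i, ∫ ω, Y i ω ^ 2 ∂μ ≤ σ ^ 2)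
    (hYbdd : ∀ i, ∀ᵐ ω ∂μ, Y i ω ≤ 1)
    (t : ℝ) (ht : 0 < t) :
    μ {ω | t ≤ ∑ i, Y i ω} ≤
      ENNReal.ofReal
        (Real.exp (-(t ^ 2) / (2 * (Real.exp (1 / σ ^ 2) - 1) * σ ^ 4 * n))) := by
  have hσ2 : (0:ℝ) < σ ^ 2 := by positivity
  set a : ℝ := 1 / σ ^ 2 with ha_def
  have ha : 0 < a := by positivity
  have haexp : a + 1 < Real.exp a := Real.add_one_lt_exp (ne_of_gt ha)
  have haσ : a * σ ^ 2 = 1 := by rw [ha_def]; field_simp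
  set c : ℝ := (Real.exp a - 1) * σ ^ 4 with hc_def
  have hc : 0 < c := by nlinarith [pow_pos hσ 4]
  -- trivial case n = 0
  rcases Nat.eq_zero_or_pos n with hn0 | hn0
  · subst hn0
    have hset : {ω : Ω | t ≤ ∑ i, Y i ω} = ∅ := by
      ext ω
      simp only [Set.mem_setOf_eq, Finset.univ_eq_empty, Finset.sum_empty,
        Set.mem_empty_iff_false, iff_false]
      exact not_le.mpr ht
    rw [hset, measure_empty]
    exact zero_le
  have hn' : (0:ℝ) < n := by exact_mod_cast hn0
  -- trivial case t > n
  by_cases htn : (n:ℝ) < t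
  · have hae : ∀ᵐ ω ∂μ, ∑ i, Y i ω ≤ (n:ℝ) := by
      filter_upwards [ae_all_iff.mpr hYbdd] with ω hω
      calc ∑ i, Y i ω ≤ ∑ _i : Fin n, (1:ℝ) := Finset.sum_le_sum fun i _ => hω i
        _ = n := by simp
    have hnull : μ {ω | ¬ (∑ i, Y i ω ≤ (n:ℝ))} = 0 := ae_iff.mp hae
    have hsub : {ω : Ω | t ≤ ∑ i, Y i ω} ⊆ {ω | ¬ (∑ i, Y i ω ≤ (n:ℝ))} := by
      intro ω hω
      simp only [Set.mem_setOf_eq] at *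
      intro hle; linarith
    rw [measure_mono_null hsub hnull]
    exact zero_le
  push_neg at htn
  -- main case
  set l : ℝ := t / (c * n) with hl_def
  have hl : 0 < l := by positivity
  have haσ4 : a ^ 2 * σ ^ 4 = 1 := by
    rw [show a ^ 2 * σ ^ 4 = (a * σ ^ 2) ^ 2 from by ring, haσ]; norm_num
  have hla : l ≤ a := by
    have h1 : l ≤ 1 / c := by
      rw [hl_def, div_le_div_iff₀ (by positivity) hc]
      nlinarith
    have h2 : 1 / c ≤ a := by
      rw [div_le_iff₀ hc]
      nlinarith [mul_pos ha (pow_pos hσ 4)]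
    linarith
  set K : ℝ := (Real.exp a - 1) / (2 * a) with hK_def
  have hKσc : K * σ ^ 2 = c / 2 := by
    rw [hK_def, hc_def]
    field_simp
    nlinarith [haσ]
  -- integrability of the exponential moments
  have hmexp : ∀ i, Measurable fun ω => Real.exp (l * Y i ω) :=
    fun i => ((hYmeas i).const_mul l).exp
  have hint_exp : ∀ i, Integrable (fun ω => Real.exp (l * Y i ω)) μ := by
    intro i
    refine Integrable.mono' (integrable_const (Real.exp l)) (hmexp i).aestronglyMeasurable ?_
    filter_upwards [hYbdd i] with ω hω
    rw [Real.norm_eq_abs, Real.abs_exp]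
    exact Real.exp_le_exp.mpr (by nlinarith)
  -- per-variable mgf bound
  have hmgf : ∀ i, mgf (Y i) μ l ≤ Real.exp (c * l ^ 2 / 2) := by
    intro i
    have hpt : ∀ᵐ ω ∂μ, Real.exp (l * Y i ω) ≤ 1 + l * Y i ω + K * l ^ 2 * Y i ω ^ 2 := by
      filter_upwards [hYbdd i] with ω hω
      have hx : l * Y i ω ≤ a := le_trans (by nlinarith) hla
      have h := key_pointwise ha hx
      calc Real.exp (l * Y i ω) ≤ 1 + l * Y i ω + K * (l * Y i ω) ^ 2 := h
        _ = 1 + l * Y i ω + K * l ^ 2 * Y i ω ^ 2 := by ring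
    have hint1 : Integrable (fun ω => 1 + l * Y i ω) μ :=
      (integrable_const 1).add ((hYint i).const_mul l)
    have hint2 : Integrable (fun ω => K * l ^ 2 * Y i ω ^ 2) μ :=
      (hYsqint i).const_mul (K * l ^ 2)
    have hint_rhs : Integrable (fun ω => 1 + l * Y i ω + K * l ^ 2 * Y i ω ^ 2) μ :=
      hint1.add hint2
    have h1 : mgf (Y i) μ l ≤ ∫ ω, (1 + l * Y i ω + K * l ^ 2 * Y i ω ^ 2) ∂μ :=
      integral_mono_ae (hint_exp i) hint_rhs hpt
    have h2 : ∫ ω, (1 + l * Y i ω + K * l ^ 2 * Y i ω ^ 2) ∂μ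
        = 1 + K * l ^ 2 * ∫ ω, Y i ω ^ 2 ∂μ := by
      rw [integral_add hint1 hint2, integral_add (integrable_const 1) ((hYint i).const_mul l),
        integral_const, integral_const_mul, integral_const_mul, hYmean i]
      simp
    have hK0 : 0 ≤ K := by
      rw [hK_def]
      have : 0 ≤ Real.exp a - 1 := by nlinarith
      positivity
    have h3 : 1 + K * l ^ 2 * ∫ ω, Y i ω ^ 2 ∂μ ≤ 1 + K * l ^ 2 * σ ^ 2 := by
      have h := mul_le_mul_of_nonneg_left (hYvar i) (mul_nonneg hK0 (sq_nonneg l))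
      linarith
    have h4 : 1 + K * l ^ 2 * σ ^ 2 ≤ Real.exp (K * l ^ 2 * σ ^ 2) := by
      linarith [Real.add_one_le_exp (K * l ^ 2 * σ ^ 2)]
    have h5 : K * l ^ 2 * σ ^ 2 = c * l ^ 2 / 2 := by
      linear_combination l ^ 2 * hKσc
    rw [← h5]
    linarith [h1, h2.le, h3, h4]
  -- Chernoff bound
  have hS : Integrable (fun ω => Real.exp (l * (∑ i, Y i) ω)) μ :=
    hYindep.integrable_exp_mul_sum hYmeas (fun i _ => hint_exp i)
  have hch :=
    measure_ge_le_exp_mul_mgf (μ := μ) (X := ∑ i, Y i) (t := l) t hl.le hS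
  have hmgfsum : mgf (∑ i, Y i) μ l = ∏ i, mgf (Y i) μ l := hYindep.mgf_sum hYmeas Finset.univ
  have hprod : ∏ i, mgf (Y i) μ l ≤ Real.exp (c * l ^ 2 / 2) ^ n := by
    calc ∏ i, mgf (Y i) μ l ≤ ∏ _i : Fin n, Real.exp (c * l ^ 2 / 2) :=
          Finset.prod_le_prod (fun i _ => mgf_nonneg) (fun i _ => hmgf i)
      _ = Real.exp (c * l ^ 2 / 2) ^ n := by simp
  have hfinal : Real.exp (-l * t) * Real.exp (c * l ^ 2 / 2) ^ n
      = Real.exp (-(t ^ 2) / (2 * (Real.exp a - 1) * σ ^ 4 * n)) := by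
    rw [← Real.exp_nat_mul, ← Real.exp_add]
    congr 1
    have h2 : 2 * (Real.exp a - 1) * σ ^ 4 * (n:ℝ) = 2 * (c * ↑n) := by rw [hc_def]; ring
    rw [h2, hl_def]
    have hcn : c * (n:ℝ) ≠ 0 := by positivity
    field_simp
    ring
  have hsetEq : {ω : Ω | t ≤ ∑ i, Y i ω} = {ω : Ω | t ≤ (∑ i, Y i) ω} := by
    ext ω; rw [Set.mem_setOf_eq, Set.mem_setOf_eq, Finset.sum_apply]
  have htoReal : (μ {ω | t ≤ ∑ i, Y i ω}).toReal
      ≤ Real.exp (-(t ^ 2) / (2 * (Real.exp a - 1) * σ ^ 4 * n)) := by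
    rw [hsetEq, ← hfinal]
    calc (μ {ω : Ω | t ≤ (∑ i, Y i) ω}).toReal
        ≤ Real.exp (-l * t) * mgf (∑ i, Y i) μ l := hch
      _ ≤ Real.exp (-l * t) * Real.exp (c * l ^ 2 / 2) ^ n := by
          rw [hmgfsum]
          exact mul_le_mul_of_nonneg_left hprod (Real.exp_pos _).le
  calc μ {ω | t ≤ ∑ i, Y i ω}
      = ENNReal.ofReal (μ {ω | t ≤ ∑ i, Y i ω}).toReal :=
        (ENNReal.ofReal_toReal (measure_ne_top μ _)).symm
    _ ≤ _ := ENNReal.ofReal_le_ofReal htoReal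
end

section
/- Let Y be a real random variable with E Y = 0 and E|Y|^p ≤ (p!/2)·σ²·M^{p−2} for every integer p ≥ 2, where M > 0 and σ² > 0. Then for every real t with |t| < 1/M, E e^{tY} ≤ 1 + σ²·t² / (2·(1 − M·|t|)) ≤ exp( σ²·t² / (2·(1 − M·|t|)) ). -/
open MeasureTheory
open scoped ENNReal NNReal

/-- **Bound on the Laplace transform under Bernstein-type moment conditions.**
Let `Y` be a centered random variable with `E|Y|^p ≤ (p!/2)·σ²·M^{p−2}` for every
integer `p ≥ 2`, where `M > 0` and `σ² > 0`. Then for every real `t` with `|t| < 1/M`,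
`E e^{tY} ≤ 1 + σ²t²/(2(1 − M|t|)) ≤ exp(σ²t²/(2(1 − M|t|)))`. -/
theorem laplace_transform_bound
    {Ω : Type*} [MeasurableSpace Ω] (μ : Measure Ω) [IsProbabilityMeasure μ]
    (Y : Ω → ℝ) (hYmeas : Measurable Y)
    (hYmom : ∀ p : ℕ, Integrable (fun ω => |Y ω| ^ p) μ)
    (hYmean : ∫ ω, Y ω ∂μ = 0)
    (M : ℝ) (hM : 0 < M) (σ2 : ℝ) (hσ2 : 0 < σ2)
    (hmom : ∀ p : ℕ, 2 ≤ p →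
      ∫ ω, |Y ω| ^ p ∂μ ≤ (p.factorial : ℝ) / 2 * σ2 * M ^ (p - 2))
    (t : ℝ) (ht : |t| < 1 / M) :
    (∫ ω, Real.exp (t * Y ω) ∂μ) ≤ 1 + σ2 * t ^ 2 / (2 * (1 - M * |t|)) ∧
      1 + σ2 * t ^ 2 / (2 * (1 - M * |t|)) ≤
        Real.exp (σ2 * t ^ 2 / (2 * (1 - M * |t|))) := by
  have hr0 : 0 ≤ M * |t| := mul_nonneg hM.le (abs_nonneg t)
  have hr1 : M * |t| < 1 := by
    have := (lt_div_iff₀' hM).mp ht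
    linarith
  set r : ℝ := M * |t| with hrdef
  have hr1' : 0 < 1 - r := by linarith
  -- exp as a tsum
  have hexp : ∀ x : ℝ, Real.exp x = ∑' n : ℕ, x ^ n / n.factorial := fun x => by
    rw [Real.exp_eq_exp_ℝ, NormedSpace.exp_eq_tsum_div]
  have hsum : ∀ x : ℝ, Summable (fun n : ℕ => x ^ n / n.factorial) :=
    Real.summable_pow_div_factorial
  have hsum2 : ∀ x : ℝ, Summable (fun p : ℕ => x ^ (p + 2) / (p + 2).factorial) := fun x =>
    (hsum x).comp_injective (add_left_injective 2)
  have htail : ∀ x : ℝ, ∑' p : ℕ, x ^ (p + 2) / (p + 2).factorial = Real.exp x - 1 - x := by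
    intro x
    have h := Summable.sum_add_tsum_nat_add 2 (hsum x)
    rw [← hexp x] at h
    simp [Finset.sum_range_succ] at h
    linarith
  -- pointwise bound
  have hpt : ∀ x : ℝ, Real.exp x ≤ 1 + x + (Real.exp |x| - 1 - |x|) := by
    intro x
    have h1 : ∑' p : ℕ, x ^ (p + 2) / (p + 2).factorial
        ≤ ∑' p : ℕ, |x| ^ (p + 2) / (p + 2).factorial := by
      refine Summable.tsum_le_tsum (fun p => ?_) (hsum2 x) (hsum2 |x|)
      have : x ^ (p + 2) ≤ |x| ^ (p + 2) := by
        calc x ^ (p + 2) ≤ |x ^ (p + 2)| := le_abs_self _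
        _ = |x| ^ (p + 2) := abs_pow x _
      gcongr
    have h2 := htail x
    have h3 := htail |x|
    linarith
  -- the tail function
  set S : Ω → ℝ := fun ω => Real.exp |t * Y ω| - 1 - |t * Y ω| with hSdef
  set f : ℕ → Ω → ℝ := fun p ω => |t * Y ω| ^ (p + 2) / (p + 2).factorial with hfdef
  have hfnn : ∀ p ω, 0 ≤ f p ω := fun p ω => by positivity
  have hSf : ∀ ω, S ω = ∑' p, f p ω := fun ω => (htail |t * Y ω|).symm
  have hSnn : ∀ ω, 0 ≤ S ω := fun ω => by
    have := Real.add_one_le_exp |t * Y ω|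
    simp only [hSdef]; linarith
  have hfm : ∀ p, Measurable (f p) := fun p =>
    ((hYmeas.const_mul t).abs.pow_const (p + 2)).div_const _
  have hfeq : ∀ p, (f p) = fun ω => (|t| ^ (p + 2) / ((p + 2).factorial : ℝ)) * |Y ω| ^ (p + 2) := by
    intro p; funext ω; simp only [hfdef, abs_mul, mul_pow]; ring
  have hfi : ∀ p, Integrable (f p) μ := fun p => by
    rw [hfeq p]; exact (hYmom (p + 2)).const_mul _
  -- the integral bound for each p
  have hIp : ∀ p : ℕ, ∫ ω, f p ω ∂μ ≤ σ2 * t ^ 2 / 2 * r ^ p := by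
    intro p
    have hfp : (0 : ℝ) < ((p + 2).factorial : ℝ) := by positivity
    have hc : (0 : ℝ) ≤ |t| ^ (p + 2) / ((p + 2).factorial : ℝ) := by positivity
    calc ∫ ω, f p ω ∂μ
        = (|t| ^ (p + 2) / ((p + 2).factorial : ℝ)) * ∫ ω, |Y ω| ^ (p + 2) ∂μ := by
          rw [hfeq p, integral_const_mul]
      _ ≤ (|t| ^ (p + 2) / ((p + 2).factorial : ℝ)) *
          (((p + 2).factorial : ℝ) / 2 * σ2 * M ^ (p + 2 - 2)) := by
          refine mul_le_mul_of_nonneg_left ?_ hc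
          exact hmom (p + 2) (by omega)
      _ = σ2 * t ^ 2 / 2 * r ^ p := by
          have h2 : |t| ^ (p + 2) = t ^ 2 * |t| ^ p := by
            rw [pow_add, sq_abs]; ring
          have h3 : p + 2 - 2 = p := by omega
          rw [h2, h3, hrdef, mul_pow]
          field_simp
  have hgeo : Summable (fun p : ℕ => σ2 * t ^ 2 / 2 * r ^ p) :=
    (summable_geometric_of_lt_one hr0 hr1).mul_left _
  have hsumI : Summable (fun p : ℕ => ∫ ω, f p ω ∂μ) :=
    Summable.of_nonneg_of_le (fun p => integral_nonneg (hfnn p)) hIp hgeo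
  -- lintegral facts
  have hlint : ∀ p, ∫⁻ ω, ‖f p ω‖ₑ ∂μ = ENNReal.ofReal (∫ ω, f p ω ∂μ) := by
    intro p
    rw [lintegral_congr (fun ω => Real.enorm_eq_ofReal (hfnn p ω)),
      ← ofReal_integral_eq_lintegral_ofReal (hfi p) (ae_of_all _ (hfnn p))]
  have hne : ∑' p, ∫⁻ ω, ‖f p ω‖ₑ ∂μ ≠ ∞ := by
    have hb : ∑' p, ∫⁻ ω, ‖f p ω‖ₑ ∂μ ≤ ENNReal.ofReal (∑' p : ℕ, σ2 * t ^ 2 / 2 * r ^ p) := by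
      rw [ENNReal.ofReal_tsum_of_nonneg (fun p => by positivity) hgeo]
      refine ENNReal.tsum_le_tsum fun p => ?_
      rw [hlint p]
      exact ENNReal.ofReal_le_ofReal (hIp p)
    exact ne_top_of_le_ne_top ENNReal.ofReal_ne_top hb
  -- S is integrable
  have hSmeas : Measurable S :=
    ((Real.measurable_exp.comp (hYmeas.const_mul t).abs).sub measurable_const).sub
      (hYmeas.const_mul t).abs
  have hSlint : ∫⁻ ω, ‖S ω‖ₑ ∂μ = ∑' p, ∫⁻ ω, ‖f p ω‖ₑ ∂μ := by
    rw [← lintegral_tsum (fun p => (hfm p).enorm.aemeasurable)]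
    refine lintegral_congr fun ω => ?_
    rw [Real.enorm_eq_ofReal (hSnn ω), hSf ω,
      ENNReal.ofReal_tsum_of_nonneg (fun p => hfnn p ω) (hsum2 |t * Y ω|)]
    exact tsum_congr fun p => (Real.enorm_eq_ofReal (hfnn p ω)).symm
  have hS_int : Integrable S μ := by
    refine ⟨hSmeas.aestronglyMeasurable, ?_⟩
    rw [HasFiniteIntegral, hSlint]
    exact lt_top_iff_ne_top.mpr hne
  -- integral of S
  have hSint_eq : ∫ ω, S ω ∂μ = ∑' p, ∫ ω, f p ω ∂μ := by
    rw [integral_congr_ae (ae_of_all _ hSf)]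
    exact integral_tsum (fun p => (hfm p).aestronglyMeasurable) hne
  have hSle : ∫ ω, S ω ∂μ ≤ σ2 * t ^ 2 / (2 * (1 - r)) := by
    rw [hSint_eq]
    calc ∑' p, ∫ ω, f p ω ∂μ ≤ ∑' p : ℕ, σ2 * t ^ 2 / 2 * r ^ p :=
          Summable.tsum_le_tsum hIp hsumI hgeo
      _ = σ2 * t ^ 2 / 2 * (1 - r)⁻¹ := by
          rw [tsum_mul_left, tsum_geometric_of_lt_one hr0 hr1]
      _ = σ2 * t ^ 2 / (2 * (1 - r)) := by
          field_simp
  -- Y integrable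
  have hY_int : Integrable Y μ := by
    refine (hYmom 1).mono' hYmeas.aestronglyMeasurable (ae_of_all _ fun ω => ?_)
    simp [Real.norm_eq_abs]
  have hg_int : Integrable (fun ω => 1 + t * Y ω + S ω) μ :=
    ((integrable_const 1).add (hY_int.const_mul t)).add hS_int
  have hmain : ∫ ω, Real.exp (t * Y ω) ∂μ ≤ 1 + σ2 * t ^ 2 / (2 * (1 - r)) := by
    calc ∫ ω, Real.exp (t * Y ω) ∂μ ≤ ∫ ω, (1 + t * Y ω + S ω) ∂μ := by
          refine integral_mono_of_nonneg (ae_of_all _ fun ω => (Real.exp_pos _).le) hg_int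
            (ae_of_all _ fun ω => ?_)
          exact hpt (t * Y ω)
      _ = 1 + t * ∫ ω, Y ω ∂μ + ∫ ω, S ω ∂μ := by
          have h1 : Integrable (fun ω => 1 + t * Y ω) μ :=
            (integrable_const 1).add (hY_int.const_mul t)
          rw [integral_add h1 hS_int, integral_add (integrable_const 1) (hY_int.const_mul t),
            integral_const, integral_const_mul]
          simp
      _ ≤ 1 + σ2 * t ^ 2 / (2 * (1 - r)) := by
          rw [hYmean]; linarith [hSle]
  refine ⟨hmain, ?_⟩
  have := Real.add_one_le_exp (σ2 * t ^ 2 / (2 * (1 - r)))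
  linarith
end
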